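/- arXiv:2104.09939 — 7 statements merged into one kernel-verified Lean document; each statement's English description precedes it below -/
import Mathlib

section
/- Let K be the middle-third Cantor set, R = K ∩ [2/3, 1], and P(x,y) = xy. Then the union P(K × K) = {0} ∪ ⋃_{k≥0} 3^{-k}·P(R × R) is a disjoint union, and consequently the Lebesgue measure satisfies L(P(K × K)) = (3/2)·L(P(R × R)). -/
open Set MeasureTheory

noncomputable def cantorK : Set ℝ :=
  {x | ∃ α : ℕ → ℝ, (∀ k, α k = 0 ∨ α k = 2) ∧ x = ∑' k : ℕ, α k / 3 ^ (k + 1)}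

def Pset (E F : Set ℝ) : Set ℝ := Set.image2 (· * ·) E F

/-!
A nonzero point of `K` whose first ternary digit `2` sits at position `m` is `r / 3 ^ m` with
`r ∈ R`, and conversely `K` is stable under division by `3`. Hence every nonzero product of two
points of `K` is a copy `3⁻ᵏ • P(R × R)`. These copies are pairwise disjoint because
`P(R × R) ⊆ [4/9, 1]` and `1 < 3 · 4/9`, so the measure is
`∑ₖ 3⁻ᵏ · L(P(R × R)) = 3/2 · L(P(R × R))`.
-/

section CantorDigits

variable {α : ℕ → ℝ}

lemma cantor_digit_term_nonneg (hα : ∀ k, α k = 0 ∨ α k = 2) (k : ℕ) :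
    0 ≤ α k / 3 ^ (k + 1) := by
  rcases hα k with h | h <;> rw [h] <;> positivity

lemma cantor_digit_term_le (hα : ∀ k, α k = 0 ∨ α k = 2) (k : ℕ) :
    α k / 3 ^ (k + 1) ≤ 2 / 3 ^ (k + 1) := by
  gcongr
  rcases hα k with h | h <;> norm_num [h]

lemma two_div_three_pow_succ_eq (k : ℕ) : (2 : ℝ) / 3 ^ (k + 1) = 2 / 3 * (1 / 3) ^ k := by
  rw [pow_succ, one_div, inv_pow]
  ring

lemma summable_two_div_three_pow_succ : Summable fun k : ℕ => (2 : ℝ) / 3 ^ (k + 1) := by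
  simp only [two_div_three_pow_succ_eq]
  exact (summable_geometric_of_lt_one (by norm_num) (by norm_num)).mul_left _

lemma tsum_two_div_three_pow_succ : ∑' k : ℕ, (2 : ℝ) / 3 ^ (k + 1) = 1 := by
  simp only [two_div_three_pow_succ_eq]
  rw [tsum_mul_left, tsum_geometric_of_lt_one (by norm_num) (by norm_num)]
  norm_num

lemma summable_cantor_digits (hα : ∀ k, α k = 0 ∨ α k = 2) :
    Summable fun k => α k / 3 ^ (k + 1) :=
  .of_nonneg_of_le (cantor_digit_term_nonneg hα) (cantor_digit_term_le hα)
    summable_two_div_three_pow_succ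

lemma tsum_cantor_digits_le_one (hα : ∀ k, α k = 0 ∨ α k = 2) :
    ∑' k, α k / 3 ^ (k + 1) ≤ 1 :=
  tsum_two_div_three_pow_succ ▸ (summable_cantor_digits hα).tsum_le_tsum
    (cantor_digit_term_le hα) summable_two_div_three_pow_succ

lemma two_thirds_le_tsum_cantor_digits (hα : ∀ k, α k = 0 ∨ α k = 2) (h0 : α 0 = 2) :
    2 / 3 ≤ ∑' k, α k / 3 ^ (k + 1) := by
  simpa [h0] using (summable_cantor_digits hα).le_tsum 0 fun k _ => cantor_digit_term_nonneg hα k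

lemma tsum_cantor_digits_eq_sum_add_shift (hα : Summable fun k => α k / 3 ^ (k + 1)) (m : ℕ) :
    ∑' k, α k / 3 ^ (k + 1) =
      ∑ k ∈ Finset.range m, α k / 3 ^ (k + 1) +
        (∑' k, α (k + m) / 3 ^ (k + 1)) / 3 ^ m := by
  rw [← hα.sum_add_tsum_nat_add m, ← tsum_div_const]
  congr 1
  refine tsum_congr fun k => ?_
  rw [div_div, ← pow_add, add_right_comm]

end CantorDigits

lemma zero_mem_cantorK : (0 : ℝ) ∈ cantorK :=
  ⟨fun _ => 0, fun _ => Or.inl rfl, by simp⟩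

lemma div_pow_mem_cantorK {x : ℝ} (hx : x ∈ cantorK) (m : ℕ) : x / 3 ^ m ∈ cantorK := by
  obtain ⟨β, hβ, rfl⟩ := hx
  set α : ℕ → ℝ := fun k => if k < m then 0 else β (k - m)
  have hα : ∀ k, α k = 0 ∨ α k = 2 := fun k => by
    by_cases hk : k < m
    · simp [α, hk]
    · simpa [α, hk] using hβ (k - m)
  refine ⟨α, hα, ?_⟩
  rw [tsum_cantor_digits_eq_sum_add_shift (summable_cantor_digits hα) m,
    Finset.sum_eq_zero fun k hk => by simp [α, Finset.mem_range.mp hk]]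
  simp [α]

lemma cantorK_eq_zero_or_eq_div_pow {x : ℝ} (hx : x ∈ cantorK) :
    x = 0 ∨ ∃ m : ℕ, ∃ r ∈ cantorK ∩ Icc (2 / 3) 1, x = r / 3 ^ m := by
  classical
  obtain ⟨α, hα, rfl⟩ := hx
  by_cases hzero : ∀ k, α k = 0
  · left
    simp [hzero]
  push Not at hzero
  set m := Nat.find hzero
  have hβ : ∀ k, α (k + m) = 0 ∨ α (k + m) = 2 := fun k => hα (k + m)
  have hβ0 : α (0 + m) = 2 := by
    simpa using (hα m).resolve_left (Nat.find_spec hzero)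
  refine Or.inr ⟨m, _, ⟨⟨_, hβ, rfl⟩, two_thirds_le_tsum_cantor_digits hβ hβ0,
    tsum_cantor_digits_le_one hβ⟩, ?_⟩
  rw [tsum_cantor_digits_eq_sum_add_shift (summable_cantor_digits hα) m,
    Finset.sum_eq_zero fun k hk => by
      simp [not_not.mp (Nat.find_min hzero (Finset.mem_range.mp hk))], zero_add]

lemma cantorK_eq_range :
    cantorK =
      range fun b : ℕ → Bool => ∑' k, (if b k then (2 : ℝ) else 0) / 3 ^ (k + 1) := by
  ext x
  constructor
  · rintro ⟨α, hα, rfl⟩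
    refine ⟨fun k => α k = 2, tsum_congr fun k => ?_⟩
    rcases hα k with h | h <;> simp [h]
  · rintro ⟨b, rfl⟩
    exact ⟨fun k => if b k then 2 else 0, fun k => by by_cases h : b k <;> simp [h], rfl⟩

lemma isCompact_cantorK : IsCompact cantorK := by
  rw [cantorK_eq_range, ← image_univ]
  refine isCompact_univ.image <| continuous_tsum (fun k => ?_)
    summable_two_div_three_pow_succ fun k b => ?_
  · exact (continuous_of_discreteTopology
      (f := fun β : Bool => (if β then (2 : ℝ) else 0) / 3 ^ (k + 1))).comp (continuous_apply k)
  · cases b k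
    · simpa using (by positivity : (0 : ℝ) ≤ 2 / 3 ^ (k + 1))
    · simp

lemma IsCompact.Pset {E F : Set ℝ} (hE : IsCompact E) (hF : IsCompact F) : IsCompact (Pset E F) :=
  hE.mul hF

lemma Pset_subset_Icc_mul {E F : Set ℝ} {a b a' b' : ℝ} (ha : 0 ≤ a) (ha' : 0 ≤ a')
    (hE : E ⊆ Icc a b) (hF : F ⊆ Icc a' b') : Pset E F ⊆ Icc (a * a') (b * b') := by
  rintro _ ⟨x, hx, y, hy, rfl⟩
  obtain ⟨hax, hxb⟩ := hE hx
  obtain ⟨hay, hyb⟩ := hF hy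
  exact ⟨mul_le_mul hax hay ha' (ha.trans hax),
    mul_le_mul hxb hyb (ha'.trans hay) (ha.trans (hax.trans hxb))⟩

lemma Pset_cantorK_eq_union_iUnion :
    Pset cantorK cantorK =
      {0} ∪ ⋃ k : ℕ, (· / 3 ^ k) '' Pset (cantorK ∩ Icc (2 / 3) 1) (cantorK ∩ Icc (2 / 3) 1) := by
  ext z
  constructor
  · rintro ⟨x, hx, y, hy, rfl⟩
    rcases cantorK_eq_zero_or_eq_div_pow hx with rfl | ⟨m, r, hr, rfl⟩
    · simp
    rcases cantorK_eq_zero_or_eq_div_pow hy with rfl | ⟨n, s, hs, rfl⟩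
    · simp
    refine Or.inr <| mem_iUnion.mpr ⟨m + n, r * s, mem_image2_of_mem hr hs, ?_⟩
    show r * s / 3 ^ (m + n) = r / 3 ^ m * (s / 3 ^ n)
    rw [pow_add, div_mul_div_comm]
  · rintro (rfl | hz)
    · exact ⟨0, zero_mem_cantorK, 0, zero_mem_cantorK, zero_mul 0⟩
    obtain ⟨k, _, ⟨r, hr, s, hs, rfl⟩, rfl⟩ := mem_iUnion.mp hz
    exact ⟨r / 3 ^ k, div_pow_mem_cantorK hr.1 k, s, hs.1, div_mul_eq_mul_div r _ s⟩

section ScaledCopies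

variable {A : Set ℝ}

lemma image_div_eq_preimage_mul {d : ℝ} (hd : d ≠ 0) : (· / d) '' A = (d * ·) ⁻¹' A :=
  congrFun (image_eq_preimage_of_inverse (fun x => mul_div_cancel₀ x hd) fun x => by field_simp) A

lemma pairwise_disjoint_image_div_pow {c a b : ℝ} (hc : 1 < c) (ha : 0 < a) (hb : b < c * a)
    (hA : A ⊆ Icc a b) : Pairwise (Function.onFun Disjoint fun k : ℕ => (· / c ^ k) '' A) := by
  refine (pairwise_disjoint_on _).mpr fun k l hkl => disjoint_left.mpr ?_
  rintro _ ⟨x, hx, rfl⟩ ⟨y, hy, hxy⟩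
  have hck : 0 < c ^ k := by positivity
  have hcl : c ^ (k + 1) ≤ c ^ l := pow_le_pow_right₀ hc.le hkl
  have : y * c ^ k < x * c ^ l :=
    calc y * c ^ k ≤ b * c ^ k := by gcongr; exact (hA hy).2
      _ < c * a * c ^ k := by gcongr
      _ = a * c ^ (k + 1) := by ring
      _ ≤ x * c ^ l := mul_le_mul (hA hx).1 hcl (by positivity) (ha.le.trans (hA hx).1)
  rw [div_eq_div_iff (by positivity) hck.ne'] at hxy
  linarith

lemma zero_notMem_image_div {d : ℝ} (hd : d ≠ 0) (hA : (0 : ℝ) ∉ A) :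
    (0 : ℝ) ∉ (· / d) '' A := by
  rintro ⟨x, hx, h⟩
  exact hA ((div_eq_zero_iff.mp h).resolve_right hd ▸ hx)

lemma volume_iUnion_image_div_pow {c : ℝ} (hc : 1 < c) (hA : MeasurableSet A)
    (hd : Pairwise (Function.onFun Disjoint fun k : ℕ => (· / c ^ k) '' A)) :
    volume (⋃ k : ℕ, (· / c ^ k) '' A) = ENNReal.ofReal (1 - c⁻¹)⁻¹ * volume A := by
  have hc0 : ∀ k : ℕ, c ^ k ≠ 0 := fun k => pow_ne_zero k (by positivity)
  have hr0 : 0 ≤ c⁻¹ := by positivity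
  have hr1 : c⁻¹ < 1 := inv_lt_one_of_one_lt₀ hc
  rw [measure_iUnion hd fun k => image_div_eq_preimage_mul (hc0 k) ▸ measurable_const_mul _ hA]
  simp only [image_div_eq_preimage_mul (hc0 _), Real.volume_preimage_mul_left (hc0 _), ← inv_pow,
    abs_of_nonneg (pow_nonneg hr0 _)]
  rw [ENNReal.tsum_mul_right, ← ENNReal.ofReal_tsum_of_nonneg (fun k => pow_nonneg hr0 k)
    (summable_geometric_of_lt_one hr0 hr1), tsum_geometric_of_lt_one hr0 hr1]

end ScaledCopies

theorem stmt1 (R : Set ℝ) (hR : R = cantorK ∩ Icc (2/3) 1)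
    (S : ℕ → Set ℝ) (hS : ∀ k, S k = (fun x : ℝ => x / 3 ^ k) '' Pset R R) :
    (Pset cantorK cantorK = {0} ∪ ⋃ k : ℕ, S k) ∧
    Pairwise (Function.onFun Disjoint S) ∧ (∀ k, (0:ℝ) ∉ S k) ∧
    volume (Pset cantorK cantorK) = (3/2) * volume (Pset R R) := by
  obtain rfl : S = _ := funext hS
  have hRsub : R ⊆ Icc (2 / 3) 1 := hR ▸ inter_subset_right
  have hRR : Pset R R ⊆ Icc (4 / 9) 1 :=
    (Pset_subset_Icc_mul (by norm_num) (by norm_num) hRsub hRsub).trans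
      (Icc_subset_Icc (by norm_num) (by norm_num))
  have hRc : IsCompact R := hR ▸ isCompact_cantorK.inter_right isClosed_Icc
  have hdisj :=
    pairwise_disjoint_image_div_pow (c := 3) (by norm_num) (by norm_num) (by norm_num) hRR
  have hK : Pset cantorK cantorK = {0} ∪ ⋃ k : ℕ, (· / 3 ^ k) '' Pset R R :=
    hR ▸ Pset_cantorK_eq_union_iUnion
  refine ⟨hK, hdisj,
    fun k => zero_notMem_image_div (by positivity) fun h => (hRR h).1.not_gt (by norm_num), ?_⟩
  rw [hK, singleton_union, measure_congr (insert_ae_eq_self _ _),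
    volume_iUnion_image_div_pow (by norm_num) (hRc.Pset hRc).isClosed.measurableSet hdisj]
  norm_num [ENNReal.ofReal_div_of_pos]
end

section
/- Let I = [a, a+3t] and J = [b, b+3t] be disjoint closed intervals contained in [2/3, 1] with t > 0. Set Ï = [a, a+t] ∪ [a+2t, a+3t] and J̈ = [b, b+t] ∪ [b+2t, b+3t]. Then {xy : x ∈ Ï, y ∈ J̈} = {xy : x ∈ I, y ∈ J}. -/
open Set

lemma image2_Icc (p q r s : ℝ) (hp : 0 < p) (hpq : p ≤ q) (hr : 0 < r) (hrs : r ≤ s) :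
    Set.image2 (· * ·) (Icc p q) (Icc r s) = Icc (p*r) (q*s) := by
  ext x
  constructor
  · rintro ⟨y, ⟨hy1, hy2⟩, z, ⟨hz1, hz2⟩, rfl⟩
    simp only [mem_Icc]
    exact ⟨by nlinarith, by nlinarith⟩
  · rintro ⟨h1, h2⟩
    have hq : 0 < q := lt_of_lt_of_le hp hpq
    by_cases hc : x ≤ q * r
    · refine ⟨x / r, ⟨?_, ?_⟩, r, ⟨le_refl r, hrs⟩, by field_simp⟩
      · rw [le_div_iff₀ hr]; linarith
      · rw [div_le_iff₀ hr]; linarith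
    · refine ⟨q, ⟨hpq, le_refl q⟩, x / q, ⟨?_, ?_⟩, by field_simp⟩
      · rw [le_div_iff₀ hq]; nlinarith
      · rw [div_le_iff₀ hq]; nlinarith

lemma key (a b t : ℝ) (ht : 0 < t) (ha : 2/3 ≤ a) (ha1 : a + 3*t ≤ 1)
    (hb : 2/3 ≤ b) (hb1 : b + 3*t ≤ 1) (hab : a + 3*t < b) :
    Pset (Icc a (a + t) ∪ Icc (a + 2*t) (a + 3*t))
         (Icc b (b + t) ∪ Icc (b + 2*t) (b + 3*t))
      = Pset (Icc a (a + 3*t)) (Icc b (b + 3*t)) := by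
  have hapos : (0:ℝ) < a := by linarith
  have hbpos : (0:ℝ) < b := by linarith
  unfold Pset
  rw [Set.image2_union_left, Set.image2_union_right, Set.image2_union_right]
  rw [image2_Icc a (a+t) b (b+t) hapos (by linarith) hbpos (by linarith),
      image2_Icc a (a+t) (b+2*t) (b+3*t) hapos (by linarith) (by linarith) (by linarith),
      image2_Icc (a+2*t) (a+3*t) b (b+t) (by linarith) (by linarith) hbpos (by linarith),
      image2_Icc (a+2*t) (a+3*t) (b+2*t) (b+3*t) (by linarith) (by linarith) (by linarith) (by linarith),
      image2_Icc a (a+3*t) b (b+3*t) hapos (by linarith) hbpos (by linarith)]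
  ext x
  simp only [mem_union, mem_Icc]
  constructor
  · rintro ((⟨h1, h2⟩ | ⟨h1, h2⟩) | (⟨h1, h2⟩ | ⟨h1, h2⟩)) <;> constructor <;> nlinarith
  · rintro ⟨h1, h2⟩
    by_cases hc1 : x ≤ (a+t) * (b+t)
    · exact Or.inl (Or.inl ⟨h1, hc1⟩)
    by_cases hc2 : x ≤ (a+t) * (b+3*t)
    · exact Or.inl (Or.inr ⟨by nlinarith, hc2⟩)
    by_cases hc3 : x ≤ (a+3*t) * (b+t)
    · exact Or.inr (Or.inl ⟨by nlinarith, hc3⟩)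
    · exact Or.inr (Or.inr ⟨by nlinarith, h2⟩)

lemma Pset_comm (E F : Set ℝ) : Pset E F = Pset F E :=
  Set.image2_comm fun x y => mul_comm x y

theorem stmt2 (a b t : ℝ) (ht : 0 < t)
    (hI : Icc a (a + 3*t) ⊆ Icc (2/3) 1) (hJ : Icc b (b + 3*t) ⊆ Icc (2/3) 1)
    (hdisj : Disjoint (Icc a (a + 3*t)) (Icc b (b + 3*t))) :
    Pset (Icc a (a + t) ∪ Icc (a + 2*t) (a + 3*t))
         (Icc b (b + t) ∪ Icc (b + 2*t) (b + 3*t))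
      = Pset (Icc a (a + 3*t)) (Icc b (b + 3*t)) := by
  have haI := hI ⟨le_refl a, by linarith⟩
  have haI' := hI ⟨by linarith, le_refl (a+3*t)⟩
  have hbJ := hJ ⟨le_refl b, by linarith⟩
  have hbJ' := hJ ⟨by linarith, le_refl (b+3*t)⟩
  obtain ⟨ha, _⟩ := haI
  obtain ⟨_, ha1⟩ := haI'
  obtain ⟨hb, _⟩ := hbJ
  obtain ⟨_, hb1⟩ := hbJ'
  rcases lt_or_ge (a + 3*t) b with h | h
  · exact key a b t ht ha ha1 hb hb1 h
  · have h' : b + 3*t < a := by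
      by_contra hcon
      push_neg at hcon
      have : max a b ∈ Icc a (a + 3*t) ∩ Icc b (b + 3*t) :=
        ⟨⟨le_max_left a b, max_le (by linarith) h⟩,
         ⟨le_max_right a b, max_le hcon (by linarith)⟩⟩
      exact absurd (hdisj.inter_eq ▸ this) (notMem_empty _)
    rw [Pset_comm, Pset_comm (Icc a (a + 3*t))]
    exact key b a t ht hb hb1 ha ha1 h'
end

section
/- Let I = [a, a+3t] ⊂ [2/3, 1] with t > 0 and set Ï = [a, a+t] ∪ [a+2t, a+3t]. Then P(I × I) \ P(Ï × Ï) equals the open interval ((a+2t)² − t², (a+2t)²), where P(x,y) = xy. -/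
open Set

lemma image2_mul_Icc {c d e f : ℝ} (hc : 0 < c) (hcd : c ≤ d) (he : 0 < e)
    (hef : e ≤ f) :
    Set.image2 (· * ·) (Icc c d) (Icc e f) = Icc (c * e) (d * f) := by
  ext x
  constructor
  · rintro ⟨y, ⟨hy1, hy2⟩, z, ⟨hz1, hz2⟩, rfl⟩
    constructor
    · exact mul_le_mul hy1 hz1 he.le (hc.le.trans hy1)
    · exact mul_le_mul hy2 hz2 (he.le.trans hz1) ((hc.le.trans hy1).trans hy2)
  · rintro ⟨h1, h2⟩
    by_cases hx : x ≤ c * f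
    · refine ⟨c, left_mem_Icc.2 hcd, x / c, ⟨?_, ?_⟩, by field_simp⟩
      · rw [le_div_iff₀ hc]; linarith [mul_comm c e]
      · rw [div_le_iff₀ hc]; linarith [mul_comm c f]
    · push_neg at hx
      have hf : 0 < f := he.trans_le hef
      refine ⟨x / f, ⟨?_, ?_⟩, f, right_mem_Icc.2 hef, by field_simp⟩
      · rw [le_div_iff₀ hf]; linarith
      · rw [div_le_iff₀ hf]; nlinarith

theorem stmt5 (a t : ℝ) (ht : 0 < t) (hI : Icc a (a + 3*t) ⊆ Icc (2/3) 1) :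
    Pset (Icc a (a + 3*t)) (Icc a (a + 3*t)) \
      Pset (Icc a (a + t) ∪ Icc (a + 2*t) (a + 3*t))
           (Icc a (a + t) ∪ Icc (a + 2*t) (a + 3*t))
      = Ioo ((a + 2*t)^2 - t^2) ((a + 2*t)^2) := by
  have ha : (2:ℝ)/3 ≤ a := (hI (left_mem_Icc.2 (by linarith))).1
  have ha' : a + 3*t ≤ 1 := (hI (right_mem_Icc.2 (by linarith))).2
  have h0 : (0:ℝ) < a := by linarith
  have hII : Pset (Icc a (a + 3*t)) (Icc a (a + 3*t))
      = Icc (a * a) ((a + 3*t) * (a + 3*t)) :=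
    image2_mul_Icc h0 (by linarith) h0 (by linarith)
  have hAA := image2_mul_Icc (c := a) (d := a + t) (e := a) (f := a + t) h0 (by linarith) h0 (by linarith)
  have hAB := image2_mul_Icc (c := a) (d := a + t) (e := a + 2*t) (f := a + 3*t)
    h0 (by linarith) (by linarith) (by linarith)
  have hBA := image2_mul_Icc (c := a + 2*t) (d := a + 3*t) (e := a) (f := a + t)
    (by linarith) (by linarith) h0 (by linarith)
  have hBB := image2_mul_Icc (c := a + 2*t) (d := a + 3*t) (e := a + 2*t)
    (f := a + 3*t) (by linarith) (by linarith) (by linarith) (by linarith)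
  unfold Pset at *
  rw [hII, Set.image2_union_left, Set.image2_union_right, Set.image2_union_right,
    hAA, hAB, hBA, hBB]
  ext x
  simp only [mem_diff, mem_Icc, mem_union, mem_Ioo]
  constructor
  · rintro ⟨⟨h1, h2⟩, h3⟩
    push_neg at h3
    obtain ⟨⟨hc1, hc2⟩, hc3, hc4⟩ := h3
    constructor
    · rcases le_or_gt x ((a+t)*(a+t)) with h | h
      · exact absurd (hc1 h1) (not_lt.2 h)
      · rcases le_or_gt x ((a+t)*(a+3*t)) with h' | h'
        · have := hc2 (by nlinarith)
          nlinarith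
        · nlinarith
    · rcases le_or_gt ((a+2*t)*(a+2*t)) x with h | h
      · exact absurd (hc4 h) (not_lt.2 h2)
      · nlinarith
  · rintro ⟨h1, h2⟩
    refine ⟨⟨by nlinarith, by nlinarith⟩, ?_⟩
    push_neg
    refine ⟨⟨fun h => by nlinarith, fun h => by nlinarith⟩,
      fun h => by nlinarith, fun h => by nlinarith⟩
end

section
/- Define B ⊂ (0,1) as the union of the open intervals (1/3^{k+1}, 2/3^{k+1}) for k ≥ 1, the interval (1/3, 2/3), and the intervals ((3^{k+1}−2)/3^{k+1}, (3^{k+1}−1)/3^{k+1}) for k ≥ 1. Define D_0 := [2/3, 1] and inductively D_n := D_{n−1} \ ⋃_{I ∈ E(D_{n−1})} A_I(B), where E(S) is the set of connected components of S with nonempty interior and A_I is the orientation-preserving affine bijection [0,1] → I. Then ⋂_{n≥0} D_n = K ∩ [2/3,1], where K is the middle-third Cantor set. -/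
/-
The Cantor set `K` satisfies `K ∩ f [0,1] = f K` for every composite `f` of the similarities
`y ↦ y / 3` and `y ↦ (2 + y) / 3`, and `[0,1] \ B` consists of `0`, `1` and countably many
intervals `c [0,1]` of this kind, each flanked on both sides by gaps of `B`. By induction on `n`,
`D_n` is the union of countably many points of `K` (endpoints of intervals of earlier levels) and
of the intervals `f [0,1]`, `f` a composite of `n` such pieces after `y ↦ (2 + y) / 3`; the gaps
make these intervals exactly the components of `D_n` with nonempty interior. So the `n`-th step
removes the sets `f B`, which miss `K`, and leaves intervals of length at most `3^-(n+1)` with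
endpoints in `K`. Hence `K ∩ [2/3, 1]` survives every step and every surviving point is a limit of
points of `K`.
-/

open Set MeasureTheory

/-- Orientation-preserving affine bijection from `[0,1]` onto the interval `I`. -/
noncomputable def affI (I : Set ℝ) (x : ℝ) : ℝ := sInf I + (sSup I - sInf I) * x

/-- The family of connected components of `S` with nonempty interior. -/
def compsE (S : Set ℝ) : Set (Set ℝ) :=
  {I | (∃ x ∈ S, I = connectedComponentIn S x) ∧ (interior I).Nonempty}

/-- The union `B` of gaps removed from `[0,1]` in the fast subdivision. -/
noncomputable def gapB : Set ℝ :=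
  (⋃ k : ℕ, Ioo ((1:ℝ)/3^(k+2)) (2/3^(k+2))) ∪ Ioo (1/3) (2/3) ∪
  ⋃ k : ℕ, Ioo (((3:ℝ)^(k+2) - 2)/3^(k+2)) ((3^(k+2) - 1)/3^(k+2))

/-- The fast subdivision of `[2/3, 1]`. -/
noncomputable def fastD : ℕ → Set ℝ
  | 0 => Icc (2/3) 1
  | n + 1 => fastD n \ ⋃ I ∈ compsE (fastD n), affI I '' gapB

open Real

theorem cantorK_eq_cantorSet : cantorK = cantorSet := by
  rw [cantorSet_eq_zero_two_ofDigits]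
  ext x
  constructor
  · rintro ⟨α, hα, rfl⟩
    refine ⟨fun k => if α k = 0 then 0 else 2, fun k => by dsimp only; split_ifs <;> decide, ?_⟩
    refine tsum_congr fun k => ?_
    rcases hα k with h | h <;> simp [ofDigitsTerm, h, div_eq_mul_inv]
  · rintro ⟨a, ha, rfl⟩
    refine ⟨fun k => a k, fun k => ?_,
      tsum_congr fun k => by simp [ofDigitsTerm, div_eq_mul_inv]⟩
    show ((a k : ℕ) : ℝ) = 0 ∨ ((a k : ℕ) : ℝ) = 2
    have := ha k
    generalize a k = d at *
    fin_cases d <;> simp_all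

lemma one_mem_cantorSet : (1 : ℝ) ∈ cantorSet := by
  rw [cantorSet_eq_zero_two_ofDigits]
  exact ⟨fun _ => Fin.last 2, fun _ => (by decide : Fin.last 2 ≠ (1 : Fin 3)),
    ofDigits_const_last_eq_one 2⟩

def IsIncAffine (f : ℝ → ℝ) : Prop := ∃ a r : ℝ, 0 < r ∧ f = fun y => a + r * y

namespace IsIncAffine

variable {f g : ℝ → ℝ}

lemma comp (hf : IsIncAffine f) (hg : IsIncAffine g) : IsIncAffine (f ∘ g) := by
  obtain ⟨a, r, hr, rfl⟩ := hf
  obtain ⟨b, s, hs, rfl⟩ := hg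
  exact ⟨a + r * b, r * s, mul_pos hr hs, by funext y; simp only [Function.comp]; ring⟩

lemma strictMono (hf : IsIncAffine f) : StrictMono f := by
  obtain ⟨a, r, hr, rfl⟩ := hf
  exact fun x y h => by dsimp only; gcongr

lemma image_Icc (hf : IsIncAffine f) (p q : ℝ) : f '' Icc p q = Icc (f p) (f q) := by
  obtain ⟨a, r, hr, rfl⟩ := hf
  rw [show (fun y => a + r * y) = (a + ·) ∘ (r * ·) from rfl, image_comp,
    image_mul_left_Icc' hr, image_const_add_Icc]
  rfl

lemma image_Ioo (hf : IsIncAffine f) (p q : ℝ) : f '' Ioo p q = Ioo (f p) (f q) := by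
  obtain ⟨a, r, hr, rfl⟩ := hf
  rw [show (fun y => a + r * y) = (a + ·) ∘ (r * ·) from rfl, image_comp,
    image_mul_left_Ioo hr, image_const_add_Ioo]
  rfl

lemma affI_image_Icc (hf : IsIncAffine f) : affI (f '' Icc 0 1) = f := by
  have h01 : f 0 ≤ f 1 := (hf.strictMono zero_lt_one).le
  obtain ⟨a, r, hr, rfl⟩ := hf
  funext y
  rw [image_Icc ⟨a, r, hr, rfl⟩, affI, csInf_Icc h01, csSup_Icc h01]
  ring

lemma sub_eq (hf : IsIncAffine f) (x y : ℝ) : f x - f y = (f 1 - f 0) * (x - y) := by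
  obtain ⟨a, r, hr, rfl⟩ := hf
  ring

end IsIncAffine

lemma isIncAffine_div_three : IsIncAffine (· / 3) :=
  ⟨0, 1 / 3, by norm_num, by funext y; ring⟩

lemma isIncAffine_two_add_div_three : IsIncAffine (fun y => (2 + y) / 3) :=
  ⟨2 / 3, 1 / 3, by norm_num, by funext y; ring⟩

def IsCantorPiece (f : ℝ → ℝ) : Prop := cantorSet ∩ f '' Icc 0 1 = f '' cantorSet

namespace IsCantorPiece

variable {f g : ℝ → ℝ}

lemma apply_mem (hf : IsCantorPiece f) {x : ℝ} (hx : x ∈ cantorSet) : f x ∈ cantorSet :=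
  (hf ▸ inter_subset_left : f '' cantorSet ⊆ cantorSet) (mem_image_of_mem f hx)

lemma image_Icc_subset (hf : IsCantorPiece f) (hf' : IsIncAffine f) :
    f '' Icc 0 1 ⊆ Icc 0 1 := by
  rw [hf'.image_Icc]
  exact Icc_subset_Icc (cantorSet_subset_unitInterval (hf.apply_mem zero_mem_cantorSet)).1
    (cantorSet_subset_unitInterval (hf.apply_mem one_mem_cantorSet)).2

lemma inter_image (hf : IsCantorPiece f) (hf' : Function.Injective f) {S : Set ℝ}
    (hS : S ⊆ Icc 0 1) : cantorSet ∩ f '' S = f '' (cantorSet ∩ S) := by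
  calc cantorSet ∩ f '' S = cantorSet ∩ f '' Icc 0 1 ∩ f '' S := by
        rw [inter_assoc, inter_eq_right.2 (image_mono hS)]
    _ = f '' (cantorSet ∩ S) := by rw [hf, image_inter hf']

lemma comp (hf : IsCantorPiece f) (hf' : IsIncAffine f) (hg : IsCantorPiece g)
    (hg' : IsIncAffine g) : IsCantorPiece (f ∘ g) := by
  rw [IsCantorPiece, image_comp,
    hf.inter_image hf'.strictMono.injective (hg.image_Icc_subset hg'), hg, image_comp]

end IsCantorPiece

lemma isCantorPiece_div_three : IsCantorPiece (· / 3) := by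
  apply Subset.antisymm
  · rintro x ⟨hx, y, hy, rfl⟩
    rw [cantorSet_eq_union_halves] at hx
    rcases hx with hx | ⟨z, hz, hzy⟩
    · exact hx
    · have := (cantorSet_subset_unitInterval hz).1
      have := hy.2
      simp only at hzy
      linarith
  · rintro _ ⟨y, hy, rfl⟩
    refine ⟨?_, y, cantorSet_subset_unitInterval hy, rfl⟩
    rw [cantorSet_eq_union_halves]
    exact Or.inl ⟨y, hy, rfl⟩

lemma isCantorPiece_two_add_div_three : IsCantorPiece (fun y => (2 + y) / 3) := by
  apply Subset.antisymm
  · rintro x ⟨hx, y, hy, rfl⟩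
    rw [cantorSet_eq_union_halves] at hx
    rcases hx with ⟨z, hz, hzy⟩ | hx
    · have := (cantorSet_subset_unitInterval hz).2
      have := hy.1
      simp only at hzy
      linarith
    · exact hx
  · rintro _ ⟨y, hy, rfl⟩
    refine ⟨?_, y, cantorSet_subset_unitInterval hy, rfl⟩
    rw [cantorSet_eq_union_halves]
    exact Or.inr ⟨y, hy, rfl⟩

def FlankedBy (G : Set ℝ) (a b : ℝ) : Prop := (∃ p < a, Ioo p a ⊆ G) ∧ ∃ q > b, Ioo b q ⊆ G

namespace FlankedBy

variable {G G' : Set ℝ} {a b : ℝ}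

lemma mono (h : FlankedBy G a b) (hG : G ⊆ G') : FlankedBy G' a b :=
  ⟨h.1.imp fun _ hp => ⟨hp.1, hp.2.trans hG⟩, h.2.imp fun _ hq => ⟨hq.1, hq.2.trans hG⟩⟩

lemma image {f : ℝ → ℝ} (h : FlankedBy G a b) (hf : IsIncAffine f) :
    FlankedBy (f '' G) (f a) (f b) := by
  obtain ⟨⟨p, hpa, hp⟩, ⟨q, hbq, hq⟩⟩ := h
  refine ⟨⟨f p, hf.strictMono hpa, ?_⟩, ⟨f q, hf.strictMono hbq, ?_⟩⟩
  · rw [← hf.image_Ioo]; exact image_mono hp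
  · rw [← hf.image_Ioo]; exact image_mono hq

lemma one_sub (h : FlankedBy G a b) : FlankedBy ((1 - ·) ⁻¹' G) (1 - b) (1 - a) := by
  obtain ⟨⟨p, hpa, hp⟩, ⟨q, hbq, hq⟩⟩ := h
  refine ⟨⟨1 - q, by linarith, fun y ⟨h1, h2⟩ => hq ⟨by linarith, by linarith⟩⟩,
    ⟨1 - p, by linarith, fun y ⟨h1, h2⟩ => hp ⟨by linarith, by linarith⟩⟩⟩

end FlankedBy

lemma connectedComponentIn_eq_Icc {S : Set ℝ} {a b x : ℝ} (hab : a ≤ b) (hS : Icc a b ⊆ S)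
    (hflank : FlankedBy Sᶜ a b) (hx : x ∈ Icc a b) : connectedComponentIn S x = Icc a b := by
  have hIcc := isPreconnected_Icc.subset_connectedComponentIn hx hS
  refine Subset.antisymm (fun y hy => ?_) hIcc
  have hC := (isPreconnected_connectedComponentIn (F := S) (x := x)).ordConnected
  have hCS := connectedComponentIn_subset S x
  obtain ⟨⟨p, hpa, hp⟩, ⟨q, hbq, hq⟩⟩ := hflank
  by_contra hy'
  rcases not_and_or.1 hy' with hya | hby
  · rw [not_le] at hya
    have hz : max ((p + a) / 2) y ∈ connectedComponentIn S x :=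
      hC.out hy (hIcc (left_mem_Icc.2 hab)) ⟨le_max_right _ _, max_le (by linarith) hya.le⟩
    exact hp ⟨lt_max_of_lt_left (by linarith), max_lt (by linarith) hya⟩ (hCS hz)
  · rw [not_le] at hby
    have hz : min ((b + q) / 2) y ∈ connectedComponentIn S x :=
      hC.out (hIcc (right_mem_Icc.2 hab)) hy ⟨le_min (by linarith) hby.le, min_le_right _ _⟩
    exact hq ⟨lt_min (by linarith) hby, min_lt_of_left_lt (by linarith)⟩ (hCS hz)

def leftGap (k : ℕ) : Set ℝ := {x | 1 < 3 ^ (k + 1) * x ∧ 3 ^ (k + 1) * x < 2}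

lemma leftGap_subset_Ioo (k : ℕ) : leftGap k ⊆ Ioo 0 (2 / 3) := by
  rintro x ⟨h1, h2⟩
  have h3 : (3 : ℝ) ≤ 3 ^ (k + 1) := le_self_pow₀ (by norm_num) (by omega)
  constructor <;> nlinarith

lemma mem_gapB {x : ℝ} : x ∈ gapB ↔ ∃ k, x ∈ leftGap k ∨ 1 - x ∈ leftGap k := by
  have h3 : ∀ k : ℕ, (0 : ℝ) < 3 ^ (k + 2) := fun k => by positivity
  simp only [gapB, leftGap, mem_union, mem_iUnion, mem_Ioo, mem_ofPred_eq]
  constructor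
  · rintro ((⟨k, h1, h2⟩ | ⟨h1, h2⟩) | ⟨k, h1, h2⟩)
    · rw [div_lt_iff₀ (h3 k)] at h1
      rw [lt_div_iff₀ (h3 k)] at h2
      exact ⟨k + 1, Or.inl ⟨by linarith, by linarith⟩⟩
    · exact ⟨0, Or.inl ⟨by norm_num; linarith, by norm_num; linarith⟩⟩
    · rw [div_lt_iff₀ (h3 k)] at h1
      rw [lt_div_iff₀ (h3 k)] at h2
      exact ⟨k + 1, Or.inr ⟨by linarith, by linarith⟩⟩
  · rintro ⟨_ | k, ⟨h1, h2⟩ | ⟨h1, h2⟩⟩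
    · norm_num at h1 h2
      exact Or.inl (Or.inr ⟨by linarith, by linarith⟩)
    · norm_num at h1 h2
      exact Or.inl (Or.inr ⟨by linarith, by linarith⟩)
    · refine Or.inl (Or.inl ⟨k, ?_, ?_⟩)
      · rw [div_lt_iff₀ (h3 k)]; linarith
      · rw [lt_div_iff₀ (h3 k)]; linarith
    · refine Or.inr ⟨k, ?_, ?_⟩
      · rw [div_lt_iff₀ (h3 k)]; linarith
      · rw [lt_div_iff₀ (h3 k)]; linarith

lemma one_sub_mem_gapB {x : ℝ} : 1 - x ∈ gapB ↔ x ∈ gapB := by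
  simp only [mem_gapB, sub_sub_cancel, or_comm]

lemma gapB_subset_Ioo : gapB ⊆ Ioo 0 1 := by
  intro x hx
  obtain ⟨k, hk | hk⟩ := mem_gapB.1 hx
  · exact Ioo_subset_Ioo_right (by norm_num) (leftGap_subset_Ioo k hk)
  · have := leftGap_subset_Ioo k hk
    constructor <;> linarith [this.1, this.2]

lemma div_three_mem_leftGap_succ {z : ℝ} {k : ℕ} :
    z / 3 ∈ leftGap (k + 1) ↔ z ∈ leftGap k := by
  simp only [leftGap, mem_ofPred_eq]
  rw [show (3 : ℝ) ^ (k + 1 + 1) * (z / 3) = 3 ^ (k + 1) * z by ring]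

lemma notMem_leftGap_of_mem_cantorSet {x : ℝ} (hx : x ∈ cantorSet) (k : ℕ) :
    x ∉ leftGap k ∧ 1 - x ∉ leftGap k := by
  induction k generalizing x with
  | zero =>
    rw [cantorSet_eq_union_halves] at hx
    simp only [leftGap, zero_add, pow_one, mem_ofPred_eq]
    rcases hx with ⟨y, hy, rfl⟩ | ⟨y, hy, rfl⟩ <;> have := cantorSet_subset_unitInterval hy <;>
      constructor <;> (rintro ⟨_, _⟩; linarith [this.1, this.2])
  | succ k ih =>
    rw [cantorSet_eq_union_halves] at hx
    rcases hx with ⟨y, hy, rfl⟩ | ⟨y, hy, rfl⟩ <;> have := cantorSet_subset_unitInterval hy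
    · refine ⟨fun hk => (ih hy).1 (div_three_mem_leftGap_succ.1 hk),
        fun hk => ?_⟩
      linarith [(leftGap_subset_Ioo _ hk).2, this.2]
    · refine ⟨fun hk => ?_, fun hk => (ih hy).2 ?_⟩
      · linarith [(leftGap_subset_Ioo _ hk).2, this.1]
      · rwa [show 1 - (2 + y) / 3 = (1 - y) / 3 by ring, div_three_mem_leftGap_succ] at hk

lemma cantorSet_inter_gapB : cantorSet ∩ gapB = ∅ := by
  refine eq_empty_iff_forall_notMem.2 fun x ⟨hx, hB⟩ => ?_
  obtain ⟨k, hk | hk⟩ := mem_gapB.1 hB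
  exacts [(notMem_leftGap_of_mem_cantorSet hx k).1 hk, (notMem_leftGap_of_mem_cantorSet hx k).2 hk]

/-- Maps `[0,1]` onto `[2/3^(m+2), 1/3^(m+1)]`, the interval of `[0,1] \ B` between the gaps
`leftGap (m + 1)` and `leftGap m`. -/
noncomputable def leftPiece (m : ℕ) (y : ℝ) : ℝ := (2 + y) / 3 ^ (m + 2)

noncomputable def rightPiece (m : ℕ) (y : ℝ) : ℝ := 1 - leftPiece m (1 - y)

def keptPieces : Set (ℝ → ℝ) := range leftPiece ∪ range rightPiece

lemma isIncAffine_leftPiece (m : ℕ) : IsIncAffine (leftPiece m) :=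
  ⟨2 / 3 ^ (m + 2), 1 / 3 ^ (m + 2), by positivity, by funext y; simp only [leftPiece]; ring⟩

lemma isIncAffine_rightPiece (m : ℕ) : IsIncAffine (rightPiece m) :=
  ⟨1 - 3 / 3 ^ (m + 2), 1 / 3 ^ (m + 2), by positivity,
    by funext y; simp only [rightPiece, leftPiece]; ring⟩

lemma isCantorPiece_leftPiece (m : ℕ) : IsCantorPiece (leftPiece m) := by
  induction m with
  | zero =>
    convert isCantorPiece_div_three.comp isIncAffine_div_three
      isCantorPiece_two_add_div_three isIncAffine_two_add_div_three using 1
    funext y; simp only [leftPiece, Function.comp]; ring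
  | succ m ih =>
    convert isCantorPiece_div_three.comp isIncAffine_div_three
      ih (isIncAffine_leftPiece m) using 1
    funext y; simp only [leftPiece, Function.comp]; ring

lemma isCantorPiece_rightPiece (m : ℕ) : IsCantorPiece (rightPiece m) := by
  induction m with
  | zero =>
    convert isCantorPiece_two_add_div_three.comp isIncAffine_two_add_div_three
      isCantorPiece_div_three isIncAffine_div_three using 1
    funext y; simp only [rightPiece, leftPiece, Function.comp]; ring
  | succ m ih =>
    convert isCantorPiece_two_add_div_three.comp isIncAffine_two_add_div_three
      ih (isIncAffine_rightPiece m) using 1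
    funext y; simp only [rightPiece, leftPiece, Function.comp]; ring

lemma mem_leftPiece_image {m : ℕ} {x : ℝ} :
    x ∈ leftPiece m '' Icc 0 1 ↔ 2 ≤ 3 ^ (m + 2) * x ∧ 3 ^ (m + 2) * x ≤ 3 := by
  have h3 : (0 : ℝ) < 3 ^ (m + 2) := by positivity
  rw [(isIncAffine_leftPiece m).image_Icc, mem_Icc, leftPiece, leftPiece, div_le_iff₀' h3,
    le_div_iff₀' h3]
  norm_num

lemma mem_rightPiece_image {m : ℕ} {x : ℝ} :
    x ∈ rightPiece m '' Icc 0 1 ↔ 1 - x ∈ leftPiece m '' Icc 0 1 := by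
  constructor
  · rintro ⟨y, ⟨hy0, hy1⟩, rfl⟩
    exact ⟨1 - y, ⟨by linarith, by linarith⟩, by rw [rightPiece, sub_sub_cancel]⟩
  · rintro ⟨y, ⟨hy0, hy1⟩, hy⟩
    exact ⟨1 - y, ⟨by linarith, by linarith⟩,
      by rw [rightPiece, sub_sub_cancel, hy, sub_sub_cancel]⟩

lemma flankedBy_leftPiece (m : ℕ) : FlankedBy gapB (leftPiece m 0) (leftPiece m 1) := by
  have h3 : (0 : ℝ) < 3 ^ (m + 2) := by positivity
  have e : (3 : ℝ) ^ (m + 2) = 3 * 3 ^ (m + 1) := by ring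
  simp only [leftPiece, add_zero]
  refine ⟨⟨1 / 3 ^ (m + 2), by gcongr; norm_num,
      fun y ⟨h1, h2⟩ => mem_gapB.2 ⟨m + 1, Or.inl ?_⟩⟩,
    ⟨6 / 3 ^ (m + 2), by gcongr; norm_num, fun y ⟨h1, h2⟩ => mem_gapB.2 ⟨m, Or.inl ?_⟩⟩⟩
  · rw [div_lt_iff₀' h3] at h1
    rw [lt_div_iff₀' h3] at h2
    exact ⟨h1, h2⟩
  · rw [div_lt_iff₀' h3] at h1
    rw [lt_div_iff₀' h3] at h2
    constructor <;> nlinarith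

lemma flankedBy_rightPiece (m : ℕ) : FlankedBy gapB (rightPiece m 0) (rightPiece m 1) := by
  have h := (flankedBy_leftPiece m).one_sub
  simp only [rightPiece, sub_zero, sub_self]
  rwa [show (1 - ·) ⁻¹' gapB = gapB from ext fun _ => one_sub_mem_gapB] at h

lemma leftPiece_image_disjoint_gapB (m : ℕ) : Disjoint (leftPiece m '' Icc 0 1) gapB := by
  refine disjoint_left.2 fun x hx hB => ?_
  obtain ⟨h2, h3⟩ := mem_leftPiece_image.1 hx
  have h9 : (9 : ℝ) ≤ 3 ^ (m + 2) := by
    calc (9 : ℝ) = 3 ^ 2 := by norm_num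
      _ ≤ 3 ^ (m + 2) := pow_le_pow_right₀ (by norm_num) (by omega)
  have hx0 : 0 ≤ x := by nlinarith
  obtain ⟨k, ⟨hk1, hk2⟩ | hk⟩ := mem_gapB.1 hB
  · rcases le_or_gt k m with hkm | hkm
    · have : (3 : ℝ) ^ (k + 1) * x ≤ 3 ^ (m + 1) * x :=
        mul_le_mul_of_nonneg_right (pow_le_pow_right₀ (by norm_num) (by omega)) hx0
      have : (3 : ℝ) ^ (m + 2) * x = 3 * (3 ^ (m + 1) * x) := by ring
      linarith
    · have : (3 : ℝ) ^ (m + 2) * x ≤ 3 ^ (k + 1) * x :=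
        mul_le_mul_of_nonneg_right (pow_le_pow_right₀ (by norm_num) (by omega)) hx0
      linarith
  · have := (leftGap_subset_Ioo k hk).2
    nlinarith

lemma exists_mem_leftPiece_image_or_leftGap {x : ℝ} (h0 : 0 < x) (h1 : x ≤ 1 / 3) :
    ∃ m, x ∈ leftPiece m '' Icc 0 1 ∨ x ∈ leftGap (m + 1) := by
  obtain ⟨n, hn1, hn2⟩ := exists_nat_pow_near (x := 1 / x) (y := 3)
    (by rw [le_div_iff₀ h0]; linarith) (by norm_num)
  rw [le_div_iff₀ h0] at hn1
  rw [div_lt_iff₀ h0] at hn2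
  obtain _ | m := n
  · norm_num at hn2; linarith
  refine ⟨m, ?_⟩
  have : (3 : ℝ) ^ (m + 2) * x = 3 * (3 ^ (m + 1) * x) := by ring
  rcases le_or_gt 2 (3 ^ (m + 2) * x) with h2 | h2
  · exact Or.inl (mem_leftPiece_image.2 ⟨h2, by linarith⟩)
  · exact Or.inr ⟨by linarith, h2⟩

section keptPieces

variable {c : ℝ → ℝ}

lemma isIncAffine_of_mem_keptPieces (hc : c ∈ keptPieces) : IsIncAffine c := by
  rcases hc with ⟨m, rfl⟩ | ⟨m, rfl⟩
  exacts [isIncAffine_leftPiece m, isIncAffine_rightPiece m]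

lemma isCantorPiece_of_mem_keptPieces (hc : c ∈ keptPieces) : IsCantorPiece c := by
  rcases hc with ⟨m, rfl⟩ | ⟨m, rfl⟩
  exacts [isCantorPiece_leftPiece m, isCantorPiece_rightPiece m]

lemma flankedBy_gapB_of_mem_keptPieces (hc : c ∈ keptPieces) : FlankedBy gapB (c 0) (c 1) := by
  rcases hc with ⟨m, rfl⟩ | ⟨m, rfl⟩
  exacts [flankedBy_leftPiece m, flankedBy_rightPiece m]

lemma sub_le_of_mem_keptPieces (hc : c ∈ keptPieces) : c 1 - c 0 ≤ 1 / 3 := by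
  have h : ∀ m : ℕ, (1 : ℝ) / 3 ^ (m + 2) ≤ 1 / 3 := fun m =>
    one_div_le_one_div_of_le (by norm_num) (le_self_pow₀ (by norm_num) (by omega))
  rcases hc with ⟨m, rfl⟩ | ⟨m, rfl⟩
  · convert h m using 1; simp only [leftPiece]; ring
  · convert h m using 1; simp only [rightPiece, leftPiece]; ring

lemma disjoint_gapB_of_mem_keptPieces (hc : c ∈ keptPieces) :
    Disjoint (c '' Icc 0 1) gapB := by
  rcases hc with ⟨m, rfl⟩ | ⟨m, rfl⟩
  · exact leftPiece_image_disjoint_gapB m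
  · refine disjoint_left.2 fun x hx hB => ?_
    exact disjoint_left.1 (leftPiece_image_disjoint_gapB m) (mem_rightPiece_image.1 hx)
      (one_sub_mem_gapB.2 hB)

end keptPieces


lemma Icc_diff_gapB : Icc 0 1 \ gapB = {0, 1} ∪ ⋃ c ∈ keptPieces, c '' Icc 0 1 := by
  apply Subset.antisymm
  · rintro x ⟨⟨h0, h1⟩, hB⟩
    rcases h0.eq_or_lt with rfl | h0
    · exact Or.inl (Or.inl rfl)
    rcases h1.eq_or_lt with rfl | h1
    · exact Or.inl (Or.inr rfl)
    refine Or.inr (mem_iUnion₂.2 ?_)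
    rcases le_or_gt x (1 / 3) with hx | hx
    · obtain ⟨m, hm | hm⟩ := exists_mem_leftPiece_image_or_leftGap h0 hx
      · exact ⟨leftPiece m, Or.inl ⟨m, rfl⟩, hm⟩
      · exact absurd (mem_gapB.2 ⟨m + 1, Or.inl hm⟩) hB
    rcases le_or_gt (2 / 3) x with hx' | hx'
    · obtain ⟨m, hm | hm⟩ := exists_mem_leftPiece_image_or_leftGap (x := 1 - x) (by linarith)
        (by linarith)
      · exact ⟨rightPiece m, Or.inr ⟨m, rfl⟩, mem_rightPiece_image.2 hm⟩
      · exact absurd (mem_gapB.2 ⟨m + 1, Or.inr hm⟩) hB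
    · exact absurd (mem_gapB.2 ⟨0, Or.inl ⟨by norm_num; linarith, by norm_num; linarith⟩⟩) hB
  · rintro x ((rfl | rfl) | hx)
    · exact ⟨⟨le_rfl, zero_le_one⟩, fun h => (gapB_subset_Ioo h).1.false⟩
    · exact ⟨⟨zero_le_one, le_rfl⟩, fun h => (gapB_subset_Ioo h).2.false⟩
    · obtain ⟨c, hc, hx⟩ := mem_iUnion₂.1 hx
      refine ⟨?_, disjoint_left.1 (disjoint_gapB_of_mem_keptPieces hc) hx⟩
      exact (isCantorPiece_of_mem_keptPieces hc).image_Icc_subset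
        (isIncAffine_of_mem_keptPieces hc) hx

/-- The intervals `f '' Icc 0 1`, `f ∈ levelMaps n`, turn out to be the components of `fastD n`
with nonempty interior (`LevelStructure.compsE_eq`). -/
noncomputable def levelMaps : ℕ → Set (ℝ → ℝ)
  | 0 => {fun y => (2 + y) / 3}
  | n + 1 => image2 (· ∘ ·) (levelMaps n) keptPieces

section levelMaps

variable {n : ℕ} {f : ℝ → ℝ}

lemma isIncAffine_of_mem_levelMaps (hf : f ∈ levelMaps n) : IsIncAffine f := by
  induction n generalizing f with
  | zero => exact (mem_singleton_iff.1 hf) ▸ isIncAffine_two_add_div_three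
  | succ n ih =>
    obtain ⟨g, hg, c, hc, rfl⟩ := hf
    exact (ih hg).comp (isIncAffine_of_mem_keptPieces hc)

lemma isCantorPiece_of_mem_levelMaps (hf : f ∈ levelMaps n) : IsCantorPiece f := by
  induction n generalizing f with
  | zero => exact (mem_singleton_iff.1 hf) ▸ isCantorPiece_two_add_div_three
  | succ n ih =>
    obtain ⟨g, hg, c, hc, rfl⟩ := hf
    exact (ih hg).comp (isIncAffine_of_mem_levelMaps hg) (isCantorPiece_of_mem_keptPieces hc)
      (isIncAffine_of_mem_keptPieces hc)

lemma sub_le_of_mem_levelMaps (hf : f ∈ levelMaps n) : f 1 - f 0 ≤ (1 / 3) ^ (n + 1) := by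
  induction n generalizing f with
  | zero => rw [mem_singleton_iff.1 hf]; norm_num
  | succ n ih =>
    obtain ⟨g, hg, c, hc, rfl⟩ := hf
    have hg' := isIncAffine_of_mem_levelMaps hg
    have hc' := isIncAffine_of_mem_keptPieces hc
    calc g (c 1) - g (c 0) = (g 1 - g 0) * (c 1 - c 0) := hg'.sub_eq _ _
      _ ≤ (1 / 3) ^ (n + 1) * (1 / 3) :=
        mul_le_mul (ih hg) (sub_le_of_mem_keptPieces hc)
          (sub_nonneg.2 (hc'.strictMono zero_lt_one).le) (by positivity)
      _ = (1 / 3) ^ (n + 1 + 1) := (pow_succ _ _).symm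

lemma levelMaps_countable (n : ℕ) : (levelMaps n).Countable := by
  induction n with
  | zero => exact countable_singleton _
  | succ n ih => exact ih.image2 ((countable_range _).union (countable_range _)) _

end levelMaps

lemma IsCantorPiece.disjoint_image_gapB {f : ℝ → ℝ} (hf : IsCantorPiece f)
    (hf' : IsIncAffine f) : Disjoint cantorSet (f '' gapB) := by
  rw [disjoint_iff_inter_eq_empty, hf.inter_image hf'.strictMono.injective
    (gapB_subset_Ioo.trans Ioo_subset_Icc_self), cantorSet_inter_gapB, image_empty]

def removedSet (n : ℕ) : Set ℝ := ⋃ f ∈ levelMaps n, f '' gapB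

lemma disjoint_cantorSet_removedSet (n : ℕ) : Disjoint cantorSet (removedSet n) :=
  disjoint_iUnion₂_right.2 fun _ hf =>
    (isCantorPiece_of_mem_levelMaps hf).disjoint_image_gapB (isIncAffine_of_mem_levelMaps hf)

def levelEnds : ℕ → Set ℝ
  | 0 => ∅
  | n + 1 => levelEnds n ∪ ⋃ f ∈ levelMaps n, {f 0, f 1}

lemma levelEnds_subset_cantorSet (n : ℕ) : levelEnds n ⊆ cantorSet := by
  induction n with
  | zero => exact empty_subset _
  | succ n ih =>
    refine union_subset ih (iUnion₂_subset fun f hf => ?_)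
    have hf' := isCantorPiece_of_mem_levelMaps hf
    exact pair_subset (hf'.apply_mem zero_mem_cantorSet) (hf'.apply_mem one_mem_cantorSet)

lemma levelEnds_countable (n : ℕ) : (levelEnds n).Countable := by
  induction n with
  | zero => exact countable_empty
  | succ n ih =>
    exact ih.union ((levelMaps_countable n).biUnion fun f _ => (toFinite _).countable)

structure LevelStructure (n : ℕ) : Prop where
  eq_union : fastD n = levelEnds n ∪ ⋃ f ∈ levelMaps n, f '' Icc 0 1
  flankedBy : ∀ f ∈ levelMaps n, FlankedBy (fastD n)ᶜ (f 0) (f 1)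

namespace LevelStructure

variable {n : ℕ} {f g : ℝ → ℝ}

lemma image_Icc_subset (h : LevelStructure n) (hf : f ∈ levelMaps n) :
    f '' Icc 0 1 ⊆ fastD n := by
  rw [h.eq_union]
  exact subset_union_of_subset_right (subset_biUnion_of_mem (u := fun f => f '' Icc 0 1) hf) _

lemma connectedComponentIn_eq_image (h : LevelStructure n) (hf : f ∈ levelMaps n) {x : ℝ}
    (hx : x ∈ f '' Icc 0 1) : connectedComponentIn (fastD n) x = f '' Icc 0 1 := by
  have hf' := isIncAffine_of_mem_levelMaps hf
  have hsub := h.image_Icc_subset hf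
  rw [hf'.image_Icc] at hx hsub ⊢
  exact connectedComponentIn_eq_Icc (hf'.strictMono zero_lt_one).le hsub (h.flankedBy f hf) hx

lemma compsE_eq (h : LevelStructure n) : compsE (fastD n) = (· '' Icc 0 1) '' levelMaps n := by
  ext I
  constructor
  · rintro ⟨⟨x, -, rfl⟩, hint⟩
    -- an interior point avoids the countably many endpoints, so it lies in some `f '' Icc 0 1`
    obtain ⟨y, hyI, hyE⟩ := ((levelEnds_countable n).dense_compl ℝ).inter_open_nonempty _
      isOpen_interior hint
    have hyC := interior_subset hyI
    have hyS := connectedComponentIn_subset _ _ hyC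
    rw [h.eq_union] at hyS
    obtain ⟨f, hf, hyf⟩ := mem_iUnion₂.1 (hyS.resolve_left hyE)
    refine ⟨f, hf, show f '' Icc 0 1 = _ from ?_⟩
    rw [← h.connectedComponentIn_eq_image hf hyf, _root_.connectedComponentIn_eq hyC]
  · rintro ⟨f, hf, rfl⟩
    have hf' := isIncAffine_of_mem_levelMaps hf
    refine ⟨⟨f 0, h.image_Icc_subset hf ⟨0, left_mem_Icc.2 zero_le_one, rfl⟩,
      (h.connectedComponentIn_eq_image hf ⟨0, left_mem_Icc.2 zero_le_one, rfl⟩).symm⟩, ?_⟩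
    show (interior (f '' Icc 0 1)).Nonempty
    rw [hf'.image_Icc, interior_Icc]
    exact nonempty_Ioo.2 (hf'.strictMono zero_lt_one)

lemma fastD_succ (h : LevelStructure n) : fastD (n + 1) = fastD n \ removedSet n := by
  rw [fastD, h.compsE_eq, biUnion_image]
  congr 1
  exact iUnion₂_congr fun f hf => by rw [(isIncAffine_of_mem_levelMaps hf).affI_image_Icc]

lemma image_Icc_inter_removedSet (h : LevelStructure n) (hg : g ∈ levelMaps n) :
    g '' Icc 0 1 ∩ removedSet n = g '' gapB := by
  have hB : gapB ⊆ Icc 0 1 := gapB_subset_Ioo.trans Ioo_subset_Icc_self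
  refine Subset.antisymm ?_ fun x hx => ⟨image_mono hB hx, mem_iUnion₂.2 ⟨g, hg, hx⟩⟩
  rintro x ⟨hxg, hxR⟩
  obtain ⟨f, hf, hxf⟩ := mem_iUnion₂.1 hxR
  have hfg : f '' Icc 0 1 = g '' Icc 0 1 := by
    rw [← h.connectedComponentIn_eq_image hf (image_mono hB hxf),
      h.connectedComponentIn_eq_image hg hxg]
  rwa [← (isIncAffine_of_mem_levelMaps hf).affI_image_Icc, hfg,
    (isIncAffine_of_mem_levelMaps hg).affI_image_Icc] at hxf

lemma image_Icc_diff_removedSet (h : LevelStructure n) (hg : g ∈ levelMaps n) :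
    g '' Icc 0 1 \ removedSet n =
      {g 0, g 1} ∪ ⋃ c ∈ keptPieces, (g ∘ c) '' Icc 0 1 := by
  rw [← sdiff_self_inter, h.image_Icc_inter_removedSet hg,
    ← image_sdiff (isIncAffine_of_mem_levelMaps hg).strictMono.injective, Icc_diff_gapB,
    image_union, image_pair, image_iUnion₂]
  simp only [image_comp]

lemma succ (h : LevelStructure n) : LevelStructure (n + 1) where
  eq_union := by
    have hE := (disjoint_cantorSet_removedSet n).mono_left (levelEnds_subset_cantorSet n)
    rw [h.fastD_succ, h.eq_union, union_sdiff_distrib, hE.sdiff_eq_left]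
    simp only [iUnion_sdiff]
    have key : ∀ g ∈ levelMaps n, g '' Icc 0 1 \ removedSet n =
        {g 0, g 1} ∪ ⋃ c ∈ keptPieces, (g ∘ c) '' Icc 0 1 :=
      fun g hg => h.image_Icc_diff_removedSet hg
    rw [iUnion₂_congr key]
    simp only [iUnion_union_distrib, levelEnds, levelMaps, biUnion_image2, union_assoc]
  flankedBy := by
    rintro _ ⟨g, hg, c, hc, rfl⟩
    refine ((flankedBy_gapB_of_mem_keptPieces hc).image (isIncAffine_of_mem_levelMaps hg)).mono ?_
    rintro x hx hxS
    rw [h.fastD_succ] at hxS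
    exact hxS.2 (mem_iUnion₂.2 ⟨g, hg, hx⟩)

end LevelStructure

lemma levelStructure_zero : LevelStructure 0 where
  eq_union := by
    simp only [fastD, levelEnds, levelMaps, empty_union, mem_singleton_iff, iUnion_iUnion_eq_left]
    rw [isIncAffine_two_add_div_three.image_Icc]
    norm_num
  flankedBy := by
    rintro f hf
    rw [mem_singleton_iff.1 hf]
    refine ⟨⟨0, by norm_num, fun y hy hyD => ?_⟩, ⟨2, by norm_num, fun y hy hyD => ?_⟩⟩
    · linarith [hy.2, hyD.1]
    · linarith [hy.1, hyD.2]

lemma levelStructure (n : ℕ) : LevelStructure n := by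
  induction n with
  | zero => exact levelStructure_zero
  | succ n ih => exact ih.succ

lemma cantorSet_inter_Icc_subset_fastD (n : ℕ) : cantorSet ∩ Icc (2 / 3) 1 ⊆ fastD n := by
  induction n with
  | zero => exact inter_subset_right
  | succ n ih =>
    rw [(levelStructure n).fastD_succ]
    exact subset_sdiff.2 ⟨ih, (disjoint_cantorSet_removedSet n).mono_left inter_subset_left⟩

lemma exists_mem_cantorSet_dist_le {n : ℕ} {x : ℝ} (hx : x ∈ fastD n) :
    ∃ y ∈ cantorSet, dist x y ≤ (1 / 3) ^ (n + 1) := by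
  rw [(levelStructure n).eq_union] at hx
  rcases hx with hx | hx
  · exact ⟨x, levelEnds_subset_cantorSet n hx, by rw [dist_self]; positivity⟩
  obtain ⟨f, hf, y, ⟨hy0, hy1⟩, rfl⟩ := mem_iUnion₂.1 hx
  have hf' := isIncAffine_of_mem_levelMaps hf
  have h01 := sub_nonneg.2 (hf'.strictMono zero_lt_one).le
  refine ⟨f 0, (isCantorPiece_of_mem_levelMaps hf).apply_mem zero_mem_cantorSet, ?_⟩
  rw [Real.dist_eq, hf'.sub_eq, sub_zero, abs_of_nonneg (mul_nonneg h01 hy0)]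
  calc (f 1 - f 0) * y ≤ f 1 - f 0 := mul_le_of_le_one_right h01 hy1
    _ ≤ (1 / 3) ^ (n + 1) := sub_le_of_mem_levelMaps hf

lemma iInter_fastD_subset_cantorSet : ⋂ n, fastD n ⊆ cantorSet := by
  intro x hx
  rw [← isClosed_cantorSet.closure_eq, Metric.mem_closure_iff]
  intro ε hε
  obtain ⟨n, hn⟩ := exists_pow_lt_of_lt_one hε (by norm_num : (1 / 3 : ℝ) < 1)
  obtain ⟨y, hy, hxy⟩ := exists_mem_cantorSet_dist_le (mem_iInter.1 hx n)
  have h3 : (1 / 3 : ℝ) ^ (n + 1) ≤ (1 / 3) ^ n :=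
    pow_le_pow_of_le_one (by norm_num) (by norm_num) n.le_succ
  exact ⟨y, hy, hxy.trans_lt (h3.trans_lt hn)⟩

theorem stmt7 : ⋂ n : ℕ, fastD n = cantorK ∩ Icc (2/3) 1 := by
  rw [cantorK_eq_cantorSet]
  exact Subset.antisymm (subset_inter iInter_fastD_subset_cantorSet (iInter_subset fastD 0))
    (subset_iInter cantorSet_inter_Icc_subset_fastD)
end

section
/- Let I ⊂ [2/3,1] be a closed interval with A_I(0)/|I| an integer, and for k ≥ 1 let E = A_I([2/3^{k+1}, 1/3^k]). Then for l ≥ 0: A_I(0)·A_I(2/3^k) < A_E(1)·A_E(1 − 2/3^{l+1}) if and only if 3^{l+2} > 2·3^k·(A_I(0)/|I|) + 2, and the same inequality is equivalent to A_I(0)·A_I(2/3^k) < A_E(1 − 1/3^{l+1})². -/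
set_option maxHeartbeats 800000


open Set

theorem stmt12 (a b : ℝ) (hab : a < b) (hI : Icc a b ⊆ Icc (2/3) 1)
    (q : ℤ) (hq : a / (b - a) = (q : ℝ))
    (A : ℝ → ℝ) (hA : ∀ x, A x = a + (b - a) * x)
    (k : ℕ) (hk : 1 ≤ k)
    (AE : ℝ → ℝ) (hAE : ∀ x, AE x = A (2/3^(k+1)) + ((b - a)/3^(k+1)) * x)
    (l : ℕ) :
    (A 0 * A (2/3^k) < AE 1 * AE (1 - 2/3^(l+1)) ↔
      (3:ℝ)^(l+2) > 2 * 3^k * (a / (b - a)) + 2) ∧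
    (A 0 * A (2/3^k) < (AE (1 - 1/3^(l+1)))^2 ↔
      (3:ℝ)^(l+2) > 2 * 3^k * (a / (b - a)) + 2) := by
  have hd : (0:ℝ) < b - a := by linarith
  have ha : a = q * (b - a) := by
    field_simp at hq
    linarith [hq]
  have hP : (0:ℝ) < 3^k := by positivity
  have hQ : (0:ℝ) < 3^(l+1) := by positivity
  set P : ℝ := 3^k with hPdef
  set Q : ℝ := 3^(l+1) with hQdef
  set d : ℝ := b - a with hddef
  set N : ℤ := 3^(l+2) - 2*q*3^k - 2 with hNdef
  have hNcast : ((N:ℝ)) = 3*Q - 2*(q:ℝ)*P - 2 := by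
    rw [hNdef]; push_cast [hPdef, hQdef, pow_succ]; ring
  have hNodd : Odd N := by
    have h3 : Odd ((3:ℤ)^(l+2)) := Odd.pow ⟨1, by norm_num⟩
    obtain ⟨m, hm⟩ := h3
    exact ⟨m - q*3^k - 1, by rw [hNdef, hm]; ring⟩
  have hNne : N ≠ 0 := by
    intro h
    rw [h] at hNodd
    exact (Int.not_odd_iff_even.mpr Even.zero) hNodd
  have h9 : (9:ℤ) ≤ 3^(l+2) := by
    calc (9:ℤ) = 3^2 := by norm_num
    _ ≤ 3^(l+2) := pow_le_pow_right₀ (by norm_num) (by omega)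
  have hcond : ((3:ℝ)^(l+2) > 2 * 3^k * (a / (b - a)) + 2) ↔ 0 < N := by
    rw [hq]
    rw [show ((0:ℤ) < N) ↔ ((0:ℝ) < (N:ℝ)) by exact_mod_cast Iff.rfl]
    rw [hNcast]
    constructor <;> intro h
    · have : (3:ℝ)^(l+2) = 3*Q := by rw [hQdef, pow_succ]; ring
      nlinarith [this]
    · have : (3:ℝ)^(l+2) = 3*Q := by rw [hQdef, pow_succ]; ring
      nlinarith [this]
  constructor
  · rw [hcond]
    have key1 : AE 1 * AE (1 - 2/3^(l+1)) - A 0 * A (2/3^k)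
        = d^2/(3*P^2*Q) * ((N:ℝ)) := by
      rw [hNcast]
      simp only [hAE, hA]
      rw [ha]
      have h1 : (3:ℝ)^(k+1) = 3*P := by rw [hPdef, pow_succ]; ring
      rw [h1]
      field_simp
      ring
    constructor <;> intro h
    · have : (0:ℝ) < d^2/(3*P^2*Q) * ((N:ℝ)) := by rw [← key1]; linarith
      have hpos : (0:ℝ) < d^2/(3*P^2*Q) := by positivity
      have : (0:ℝ) < (N:ℝ) := by
        by_contra hc
        push_neg at hc
        nlinarith
      exact_mod_cast this
    · have hNR : (0:ℝ) < (N:ℝ) := by exact_mod_cast h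
      have hpos : (0:ℝ) < d^2/(3*P^2*Q) := by positivity
      nlinarith [key1]
  · rw [hcond]
    set M : ℤ := 3^(l+2) * N + 1 with hMdef
    have hMcast : ((M:ℝ)) = 3*Q*(3*Q - 2*(q:ℝ)*P - 2) + 1 := by
      rw [hMdef]
      push_cast [hNcast]
      rw [hQdef, pow_succ]; push_cast; ring
    have key2 : (AE (1 - 1/3^(l+1)))^2 - A 0 * A (2/3^k)
        = d^2/(9*P^2*Q^2) * ((M:ℝ)) := by
      rw [hMcast]
      simp only [hAE, hA]
      rw [ha]
      have h1 : (3:ℝ)^(k+1) = 3*P := by rw [hPdef, pow_succ]; ring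
      rw [h1]
      field_simp
      ring
    have hMN : (0 < M) ↔ (0 < N) := by
      constructor <;> intro h
      · by_contra hc
        push_neg at hc
        have hN1 : N ≤ -1 := by omega
        have := mul_le_mul_of_nonneg_left hN1 (show (0:ℤ) ≤ 3^(l+2) by positivity)
        rw [hMdef] at h
        omega
      · have hN1 : 1 ≤ N := h
        have := mul_le_mul_of_nonneg_left hN1 (show (0:ℤ) ≤ 3^(l+2) by positivity)
        rw [hMdef]
        omega
    constructor <;> intro h
    · rw [← hMN]
      have : (0:ℝ) < d^2/(9*P^2*Q^2) * ((M:ℝ)) := by rw [← key2]; linarith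
      have hpos : (0:ℝ) < d^2/(9*P^2*Q^2) := by positivity
      have : (0:ℝ) < (M:ℝ) := by
        by_contra hc
        push_neg at hc
        nlinarith
      exact_mod_cast this
    · have hM : 0 < M := hMN.mpr h
      have hMR : (0:ℝ) < (M:ℝ) := by exact_mod_cast hM
      have hpos : (0:ℝ) < d^2/(9*P^2*Q^2) := by positivity
      nlinarith [key2]
end

section
/- Let I ⊂ [2/3,1] be a closed interval with A_I(0)/|I| an integer, and for k ≥ 1 let F = A_I([1 − 1/3^k, 1 − 2/3^{k+1}]). Then for l ≥ 0: A_I(1 − 1/3^{k+1})·A_I(1 − 1/3^k) < A_F(1)·A_F(1 − 2/3^{l+1}) if and only if 3^{l+1} > 2·3^{k+1}·(A_I(0)/|I| + 1) − 4, and the same inequality is equivalent to A_I(1 − 1/3^{k+1})·A_I(1 − 1/3^k) < A_F(1 − 1/3^{l+1})². -/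
open Set

theorem stmt13 (a b : ℝ) (hab : a < b) (hI : Icc a b ⊆ Icc (2/3) 1)
    (q : ℤ) (hq : a / (b - a) = (q : ℝ))
    (A : ℝ → ℝ) (hA : ∀ x, A x = a + (b - a) * x)
    (k : ℕ) (hk : 1 ≤ k)
    (AF : ℝ → ℝ) (hAF : ∀ x, AF x = A (1 - 1/3^k) + ((b - a)/3^(k+1)) * x)
    (l : ℕ) :
    (A (1 - 1/3^(k+1)) * A (1 - 1/3^k) < AF 1 * AF (1 - 2/3^(l+1)) ↔
      (3:ℝ)^(l+1) > 2 * 3^(k+1) * (a / (b - a) + 1) - 4) ∧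
    (A (1 - 1/3^(k+1)) * A (1 - 1/3^k) < (AF (1 - 1/3^(l+1)))^2 ↔
      (3:ℝ)^(l+1) > 2 * 3^(k+1) * (a / (b - a) + 1) - 4) := by
  have hd : (0:ℝ) < b - a := sub_pos.mpr hab
  set d : ℝ := b - a with hdef
  have hdne : d ≠ 0 := ne_of_gt hd
  have hP : (0:ℝ) < 3^(k+1) := by positivity
  have hT : (0:ℝ) < 3^(l+1) := by positivity
  have hPk : (0:ℝ) < 3^k := by positivity
  have hfac : (0:ℝ) < d / 3^(k+1) := by positivity
  have hfac2 : (0:ℝ) < d / (3^(k+1) * 3^(l+1)) := by positivity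
  -- the common arithmetic bound as an integer
  have hNZ : 2 * (3:ℝ)^(k+1) * (a / d + 1) - 4
      = ((2 * 3^(k+1) * (q+1) - 4 : ℤ) : ℝ) := by
    rw [hq]; push_cast; ring
  -- first equivalence
  have h1 : (A (1 - 1/3^(k+1)) * A (1 - 1/3^k) < AF 1 * AF (1 - 2/3^(l+1)) ↔
      (3:ℝ)^(l+1) > 2 * 3^(k+1) * (a / d + 1) - 4) := by
    have hdiff : AF 1 * AF (1 - 2/3^(l+1)) - A (1 - 1/3^(k+1)) * A (1 - 1/3^k)
        = (3^(l+1) - (2 * 3^(k+1) * (a / d + 1) - 4)) * (d / (3^(k+1) * 3^(l+1))) * (d / 3^(k+1)) := by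
      simp only [hAF, hA]
      field_simp
      ring
    rw [← sub_pos, hdiff, mul_pos_iff_of_pos_right hfac,
      mul_pos_iff_of_pos_right hfac2, sub_pos, gt_iff_lt]
  constructor
  · exact h1
  · -- second equivalence; reduce to the first via an integrality argument
    have hdiff2 : (AF (1 - 1/3^(l+1)))^2 - A (1 - 1/3^(k+1)) * A (1 - 1/3^k)
        = (3^(l+1) + 1/3^(l+1) - (2 * 3^(k+1) * (a / d + 1) - 4)) * (d / (3^(k+1) * 3^(l+1))) * (d / 3^(k+1)) := by
      simp only [hAF, hA]
      field_simp
      ring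
    rw [← sub_pos, hdiff2, mul_pos_iff_of_pos_right hfac,
      mul_pos_iff_of_pos_right hfac2, sub_pos, gt_iff_lt]
    constructor
    · intro h
      by_contra hle
      push_neg at hle
      -- so 3^(l+1) ≤ N < 3^(l+1) + 1/3^(l+1)
      have hinv : 1 / (3:ℝ)^(l+1) ≤ 1 := by
        rw [div_le_one hT]
        exact one_le_pow₀ (by norm_num)
      rw [hNZ] at h hle
      have hZ1' : (2 * 3^(k+1) * (q+1) - 4 : ℤ) < 3^(l+1) + 1 := by
        exact_mod_cast lt_of_lt_of_le h (by linarith : (3:ℝ)^(l+1) + 1/3^(l+1) ≤ 3^(l+1) + 1)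
      have hZ2' : ((3:ℤ)^(l+1)) ≤ 2 * 3^(k+1) * (q+1) - 4 := by exact_mod_cast hle
      have heq : (3:ℤ)^(l+1) = 2 * 3^(k+1) * (q+1) - 4 := le_antisymm hZ2' (by omega)
      have hodd : Odd ((3:ℤ)^(l+1)) := Odd.pow ⟨1, by ring⟩
      have heven : Even (2 * 3^(k+1) * (q+1) - 4 : ℤ) := ⟨3^(k+1) * (q+1) - 2, by ring⟩
      rw [heq] at hodd
      exact ((Int.not_odd_iff_even.mpr heven)) hodd
    · intro h
      have hinv : 0 < 1 / (3:ℝ)^(l+1) := by positivity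
      linarith
end

section
/- With I = [2/3,1] and the fast subdivision, L(P(I × I) \ P(D_1 × D_1)) = 5/324, where D_1 = I \ A_I(B) and P(x,y) = xy. -/
open Set MeasureTheory

/-! ### Auxiliary facts -/

lemma tp_pos (n : ℕ) : (0:ℝ) < 3^n := by positivity

lemma tp_mono {m n : ℕ} (h : m ≤ n) : (3:ℝ)^m ≤ 3^n := by
  gcongr
  norm_num

lemma inv_tp_pos (n : ℕ) : (0:ℝ) < 1/3^n := by positivity

lemma inv_tp_le {m n : ℕ} (h : m ≤ n) : (1:ℝ)/3^n ≤ 1/3^m :=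
  one_div_le_one_div_of_le (tp_pos m) (tp_mono h)

lemma inv_tp_le_one (n : ℕ) : (1:ℝ)/3^n ≤ 1 := by
  calc (1:ℝ)/3^n ≤ 1/3^0 := inv_tp_le (Nat.zero_le n)
  _ = 1 := by norm_num

lemma inv_tp_le9 (k : ℕ) : (1:ℝ)/3^(k+2) ≤ 1/9 := by
  calc (1:ℝ)/3^(k+2) ≤ 1/3^2 := inv_tp_le (by omega)
  _ = 1/9 := by norm_num

lemma inv_tp_le27 (k : ℕ) : (1:ℝ)/3^(k+3) ≤ 1/27 := by
  calc (1:ℝ)/3^(k+3) ≤ 1/3^3 := inv_tp_le (by omega)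
  _ = 1/27 := by norm_num

lemma two_e (n : ℕ) : (2:ℝ)/3^n = 2*(1/3^n) := by ring

lemma compsE_Icc : compsE (Icc (2/3:ℝ) 1) = {Icc (2/3) 1} := by
  ext I
  constructor
  · rintro ⟨⟨x, hx, rfl⟩, -⟩
    simp [isPreconnected_Icc.connectedComponentIn hx]
  · rintro rfl
    refine ⟨⟨2/3, by norm_num, (isPreconnected_Icc.connectedComponentIn (by norm_num)).symm⟩, ?_⟩
    rw [interior_Icc]
    exact ⟨0.7, by norm_num⟩

lemma affI_Icc : affI (Icc (2/3:ℝ) 1) = fun x => 2/3 + (1/3) * x := by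
  funext x
  unfold affI
  rw [csInf_Icc (by norm_num), csSup_Icc (by norm_num)]
  norm_num

lemma img_Ioo (a b : ℝ) :
    (fun x => 2/3 + (1/3) * x) '' Ioo a b = Ioo (2/3 + (1/3)*a) (2/3 + (1/3)*b) := by
  ext y
  simp only [mem_image, mem_Ioo]
  constructor
  · rintro ⟨x, ⟨h1, h2⟩, rfl⟩
    constructor <;> linarith
  · rintro ⟨h1, h2⟩
    exact ⟨3*(y - 2/3), ⟨by linarith, by linarith⟩, by ring⟩

lemma fastD_one : fastD 1 = Icc (2/3:ℝ) 1 \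
    ((⋃ k : ℕ, Ioo (2/3 + 1/3^(k+3)) (2/3 + 2/3^(k+3))) ∪ Ioo (7/9) (8/9) ∪
      ⋃ k : ℕ, Ioo (1 - 2/3^(k+3)) (1 - 1/3^(k+3))) := by
  have h1 : fastD 1 = fastD 0 \ ⋃ I ∈ compsE (fastD 0), affI I '' gapB := rfl
  have h0 : fastD 0 = Icc (2/3:ℝ) 1 := rfl
  rw [h1, h0, compsE_Icc]
  congr 1
  rw [Set.biUnion_singleton, affI_Icc, gapB, image_union, image_union, image_iUnion, image_iUnion]
  congr 1
  · congr 1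
    · exact iUnion_congr fun k => by
        rw [img_Ioo]
        congr 1 <;> · rw [show k+3 = (k+2)+1 from rfl, pow_succ]; ring
    · rw [img_Ioo]; norm_num
  · exact iUnion_congr fun k => by
      rw [img_Ioo]
      have h3 := tp_pos (k+2)
      congr 1 <;>
      · rw [show k+3 = (k+2)+1 from rfl, pow_succ]
        field_simp
        ring

lemma fastD1_mem_Icc {x : ℝ} (hx : x ∈ fastD 1) : 2/3 ≤ x ∧ x ≤ 1 := by
  rw [fastD_one] at hx
  exact ⟨hx.1.1, hx.1.2⟩

lemma gapNotL {x : ℝ} (hx : x ∈ fastD 1) (k : ℕ) :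
    x ≤ 2/3 + 1/3^(k+3) ∨ 2/3 + 2/3^(k+3) ≤ x := by
  rw [fastD_one] at hx
  rcases hx with ⟨-, hg⟩
  by_contra h
  push_neg at h
  exact hg (Or.inl (Or.inl (mem_iUnion.2 ⟨k, h.1, h.2⟩)))

lemma gapNotM {x : ℝ} (hx : x ∈ fastD 1) : x ≤ 7/9 ∨ 8/9 ≤ x := by
  rw [fastD_one] at hx
  rcases hx with ⟨-, hg⟩
  by_contra h
  push_neg at h
  exact hg (Or.inl (Or.inr ⟨h.1, h.2⟩))

lemma gapNotR {x : ℝ} (hx : x ∈ fastD 1) (k : ℕ) :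
    x ≤ 1 - 2/3^(k+3) ∨ 1 - 1/3^(k+3) ≤ x := by
  rw [fastD_one] at hx
  rcases hx with ⟨-, hg⟩
  by_contra h
  push_neg at h
  exact hg (Or.inr (mem_iUnion.2 ⟨k, h.1, h.2⟩))

lemma mem_fastD1_of {x : ℝ} (h1 : 2/3 ≤ x) (h2 : x ≤ 1)
    (hL : ∀ k : ℕ, x ∉ Ioo (2/3 + 1/3^(k+3)) (2/3 + 2/3^(k+3)))
    (hM : x ∉ Ioo (7/9:ℝ) (8/9))
    (hR : ∀ k : ℕ, x ∉ Ioo (1 - 2/3^(k+3)) (1 - 1/3^(k+3))) : x ∈ fastD 1 := by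
  rw [fastD_one]
  refine ⟨⟨h1, h2⟩, ?_⟩
  rintro ((h | h) | h)
  · obtain ⟨k, hk⟩ := mem_iUnion.1 h
    exact hL k hk
  · exact hM h
  · obtain ⟨k, hk⟩ := mem_iUnion.1 h
    exact hR k hk

/-! ### The components of `fastD 1` -/

lemma L_sub (k : ℕ) : Icc (2/3 + 2/3^(k+3)) (2/3 + 1/3^(k+2)) ⊆ fastD 1 := by
  rintro x ⟨hx1, hx2⟩
  have h9 : (1:ℝ)/3^(k+2) ≤ 1/9 := inv_tp_le9 k
  have hp3 : (0:ℝ) < 1/3^(k+3) := inv_tp_pos _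
  have ek := two_e (k+3)
  apply mem_fastD1_of
  · linarith
  · linarith
  · intro j hj
    obtain ⟨hj1, hj2⟩ := hj
    have ej := two_e (j+3)
    rcases le_or_gt j k with h | h
    · rcases lt_or_eq_of_le h with h' | h'
      · have hle : (1:ℝ)/3^(k+2) ≤ 1/3^(j+3) := inv_tp_le (by omega)
        linarith
      · subst h'
        linarith
    · have hle : (1:ℝ)/3^(j+3) ≤ 1/3^(k+3) := inv_tp_le (by omega)
      linarith
  · intro hj
    obtain ⟨h1, h2⟩ := hj
    linarith
  · intro j hj
    obtain ⟨hj1, hj2⟩ := hj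
    have ej := two_e (j+3)
    have h27 : (1:ℝ)/3^(j+3) ≤ 1/27 := inv_tp_le27 j
    linarith

lemma R_sub (k : ℕ) : Icc (1 - 1/3^(k+2)) (1 - 2/3^(k+3)) ⊆ fastD 1 := by
  rintro x ⟨hx1, hx2⟩
  have h9 : (1:ℝ)/3^(k+2) ≤ 1/9 := inv_tp_le9 k
  have hp3 : (0:ℝ) < 1/3^(k+3) := inv_tp_pos _
  have ek := two_e (k+3)
  have e3 : (1:ℝ)/3^(k+2) = 3*(1/3^(k+3)) := by
    rw [show k+3 = (k+2)+1 from rfl, pow_succ]; ring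
  apply mem_fastD1_of
  · linarith
  · linarith
  · intro j hj
    obtain ⟨hj1, hj2⟩ := hj
    have ej := two_e (j+3)
    have h27 : (1:ℝ)/3^(j+3) ≤ 1/27 := inv_tp_le27 j
    linarith
  · intro hj
    obtain ⟨h1, h2⟩ := hj
    linarith
  · intro j hj
    obtain ⟨hj1, hj2⟩ := hj
    have ej := two_e (j+3)
    rcases le_or_gt j k with h | h
    · rcases lt_or_eq_of_le h with h' | h'
      · have hle : (1:ℝ)/3^(k+2) ≤ 1/3^(j+3) := inv_tp_le (by omega)
        linarith
      · subst h'
        linarith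
    · have hle : (1:ℝ)/3^(j+3) ≤ 1/3^(k+3) := inv_tp_le (by omega)
      linarith

lemma two_thirds_mem : (2/3:ℝ) ∈ fastD 1 := by
  apply mem_fastD1_of (le_refl _) (by norm_num)
  · intro j hj
    obtain ⟨h1, h2⟩ := hj
    have := inv_tp_pos (j+3)
    linarith
  · intro hj
    obtain ⟨h1, h2⟩ := hj
    norm_num at h1
  · intro j hj
    obtain ⟨h1, h2⟩ := hj
    have ej := two_e (j+3)
    have h27 : (1:ℝ)/3^(j+3) ≤ 1/27 := inv_tp_le27 j
    linarith

lemma one_mem : (1:ℝ) ∈ fastD 1 := by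
  apply mem_fastD1_of (by norm_num) (le_refl _)
  · intro j hj
    obtain ⟨h1, h2⟩ := hj
    have ej := two_e (j+3)
    have h27 : (1:ℝ)/3^(j+3) ≤ 1/27 := inv_tp_le27 j
    linarith
  · intro hj
    obtain ⟨h1, h2⟩ := hj
    norm_num at h2
  · intro j hj
    obtain ⟨h1, h2⟩ := hj
    have := inv_tp_pos (j+3)
    linarith

/-! ### Products of intervals inside the product set -/

lemma Pset_cases {E F : Set ℝ} {z : ℝ} (h : z ∈ Pset E F) :
    ∃ x y, x ∈ E ∧ y ∈ F ∧ z = x * y := by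
  obtain ⟨x, hx, y, hy, hxy⟩ := h
  exact ⟨x, y, hx, hy, hxy.symm⟩

lemma mul_mem_Pset {x y : ℝ} (hx : x ∈ fastD 1) (hy : y ∈ fastD 1) :
    x * y ∈ Pset (fastD 1) (fastD 1) := ⟨x, hx, y, hy, rfl⟩

lemma Icc_mul_cover {A B C D z : ℝ} (hA : 0 < A) (hAB : A ≤ B) (hC : 0 < C) (hCD : C ≤ D)
    (h1 : Icc A B ⊆ fastD 1) (h2 : Icc C D ⊆ fastD 1)
    (hz1 : A * C ≤ z) (hz2 : z ≤ B * D) : z ∈ Pset (fastD 1) (fastD 1) := by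
  have hD : 0 < D := lt_of_lt_of_le hC hCD
  have hz0 : 0 < z := lt_of_lt_of_le (by positivity) hz1
  set x := max A (z/D) with hxdef
  have hx1 : A ≤ x := le_max_left _ _
  have hx0 : 0 < x := lt_of_lt_of_le hA hx1
  have hxB : x ≤ B := by
    apply max_le hAB
    rw [div_le_iff₀ hD]
    linarith
  have hyD : z / x ≤ D := by
    rw [div_le_iff₀ hx0]
    have h := le_max_right A (z/D)
    have : z/D * D ≤ x * D := mul_le_mul_of_nonneg_right h hD.le
    rw [div_mul_cancel₀ _ (ne_of_gt hD)] at this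
    linarith [this]
  have hyC : C ≤ z / x := by
    rw [le_div_iff₀ hx0]
    rcases le_total A (z/D) with h | h
    · have hx : x = z/D := max_eq_right h
      rw [hx]
      have h3 : C * (z/D) ≤ D * (z/D) := by
        apply mul_le_mul_of_nonneg_right hCD
        positivity
      rw [mul_div_cancel₀ _ (ne_of_gt hD)] at h3
      linarith [h3]
    · have hx : x = A := max_eq_left h
      rw [hx, mul_comm]
      exact hz1
  have hfin : x * (z / x) = z := by
    field_simp
  exact ⟨x, h1 ⟨hx1, hxB⟩, z/x, h2 ⟨hyC, hyD⟩, hfin⟩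

lemma coverR' {a z : ℝ} (ha0 : 0 < a) (ha9 : a ≤ 1/9)
    (hRm : Icc (1-a) (1-2*a/3) ⊆ fastD 1) (hRm1 : Icc (1-a/3) (1-2*a/9) ⊆ fastD 1)
    (h1 : (1-a)^2 ≤ z) (h2 : z ≤ 1-2*a/3) : z ∈ Pset (fastD 1) (fastD 1) := by
  rcases le_or_gt z ((1-2*a/3)^2) with hc | hc
  · exact Icc_mul_cover (by linarith) (by linarith) (by linarith) (by linarith) hRm hRm
      (by nlinarith) (by nlinarith)
  · rcases le_or_gt z ((1-2*a/3)*(1-2*a/9)) with hd | hd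
    · exact Icc_mul_cover (by linarith) (by linarith) (by linarith) (by linarith) hRm hRm1
        (by nlinarith) (by nlinarith)
    · have hz1 : 1 - a ≤ z := by nlinarith
      have := hRm ⟨hz1, h2⟩
      have heq : z * 1 = z := mul_one z
      exact heq ▸ mul_mem_Pset this one_mem

lemma coverR (m : ℕ) {z : ℝ} (h1 : (1 - 1/3^(m+2))^2 ≤ z) (h2 : z ≤ 1 - 2/3^(m+3)) :
    z ∈ Pset (fastD 1) (fastD 1) := by
  have ha0 : (0:ℝ) < 1/3^(m+2) := inv_tp_pos _
  have ha9 : (1:ℝ)/3^(m+2) ≤ 1/9 := inv_tp_le9 m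
  have E2 : (2:ℝ)/3^(m+3) = 2*(1/3^(m+2))/3 := by
    rw [show m+3 = (m+2)+1 from rfl, pow_succ]; ring
  have E3 : (1:ℝ)/3^(m+3) = (1/3^(m+2))/3 := by
    rw [show m+3 = (m+2)+1 from rfl, pow_succ]; ring
  have E4 : (2:ℝ)/3^(m+4) = 2*(1/3^(m+2))/9 := by
    rw [show m+4 = ((m+2)+1)+1 from rfl, pow_succ, pow_succ]; ring
  apply coverR' ha0 ha9 ?_ ?_ h1 (by rw [← E2]; exact h2)
  · have h := R_sub m
    rwa [E2] at h
  · have h := R_sub (m+1)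
    rw [show m+1+2 = m+3 from by omega, show m+1+3 = m+4 from by omega] at h
    rwa [E3, E4] at h

lemma coverL' {a z : ℝ} (ha0 : 0 < a) (ha : a ≤ 1/27)
    (hK : Icc (2/3+2*a/3) (2/3+a) ⊆ fastD 1)
    (hK1 : Icc (2/3+2*a) (2/3+3*a) ⊆ fastD 1)
    (hK2 : Icc (2/3+2*a^2/3) (2/3+a^2) ⊆ fastD 1)
    (h1 : (2/3+2*a/3)^2 ≤ z) (h2 : z ≤ (2/3+a)*(2/3+3*a)) :
    z ∈ Pset (fastD 1) (fastD 1) := by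
  rcases le_or_gt z ((2/3+a)^2) with hc | hc
  · exact Icc_mul_cover (by linarith) (by linarith) (by linarith) (by linarith) hK hK
      (by nlinarith) (by nlinarith)
  · rcases le_or_gt z ((2/3+3*a)*(2/3+a^2)) with hd | hd
    · refine Icc_mul_cover (by linarith) (by linarith) ?_ ?_ hK1 hK2 (by nlinarith) (by nlinarith)
      · nlinarith
      · nlinarith
    · exact Icc_mul_cover (by linarith) (by linarith) (by linarith) (by linarith) hK1 hK
        (by nlinarith) (by nlinarith)

lemma coverL (k : ℕ) {z : ℝ} (h1 : (2/3 + 2/3^(k+4))^2 ≤ z)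
    (h2 : z ≤ (2/3 + 1/3^(k+3)) * (2/3 + 1/3^(k+2))) :
    z ∈ Pset (fastD 1) (fastD 1) := by
  have ha0 : (0:ℝ) < 1/3^(k+3) := inv_tp_pos _
  have ha : (1:ℝ)/3^(k+3) ≤ 1/27 := inv_tp_le27 k
  have E1 : (2:ℝ)/3^(k+4) = 2*(1/3^(k+3))/3 := by
    rw [show k+4 = (k+3)+1 from rfl, pow_succ]; ring
  have E2 : (1:ℝ)/3^(k+2) = 3*(1/3^(k+3)) := by
    rw [show k+3 = (k+2)+1 from rfl, pow_succ]; ring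
  have E3 : (2:ℝ)/3^(k+3) = 2*(1/3^(k+3)) := by ring
  have E4 : (1:ℝ)/3^(2*k+6) = (1/3^(k+3))^2 := by
    rw [div_pow, one_pow, ← pow_mul, show (k+3)*2 = 2*k+6 from by omega]
  have E5 : (2:ℝ)/3^(2*k+7) = 2*(1/3^(k+3))^2/3 := by
    rw [show 2*k+7 = (2*k+6)+1 from rfl, pow_succ, ← E4]; ring
  rw [E2] at h2
  apply coverL' ha0 ha ?_ ?_ ?_ (by rw [← E1]; exact h1) h2
  · have h := L_sub (k+1)
    rw [show k+1+3 = k+4 from by omega, show k+1+2 = k+3 from by omega] at h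
    rwa [E1] at h
  · have h := L_sub k
    rwa [E3, E2] at h
  · have h := L_sub (2*k+4)
    rw [show 2*k+4+3 = 2*k+7 from by omega, show 2*k+4+2 = 2*k+6 from by omega] at h
    rwa [E5, E4] at h

lemma coverL0 {z : ℝ} (h1 : (400:ℝ)/729 ≤ z) (h2 : z ≤ 7/9) :
    z ∈ Pset (fastD 1) (fastD 1) := by
  have l0 := L_sub 0
  have l1 := L_sub 1
  have l2 := L_sub 2
  have r0 := R_sub 0
  have r1 := R_sub 1
  norm_num at l0 l1 l2 r0 r1
  rcases le_or_gt z (49/81) with hc | hc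
  · exact Icc_mul_cover (by norm_num) (by norm_num) (by norm_num) (by norm_num) l0 l0
      (by norm_num; linarith) (by norm_num; linarith)
  rcases le_or_gt z (1375/2187) with hc2 | hc2
  · exact Icc_mul_cover (by norm_num) (by norm_num) (by norm_num) (by norm_num) l2 r0
      (by norm_num; linarith) (by norm_num; linarith)
  rcases le_or_gt z (1425/2187) with hc3 | hc3
  · exact Icc_mul_cover (by norm_num) (by norm_num) (by norm_num) (by norm_num) l1 r0
      (by norm_num; linarith) (by norm_num; linarith)
  rcases le_or_gt z (13035/19683) with hc4 | hc4
  · exact Icc_mul_cover (by norm_num) (by norm_num) (by norm_num) (by norm_num) l2 r1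
      (by norm_num; linarith) (by norm_num; linarith)
  rcases le_or_gt z (175/243) with hc5 | hc5
  · exact Icc_mul_cover (by norm_num) (by norm_num) (by norm_num) (by norm_num) l0 r0
      (by norm_num; linarith) (by norm_num; linarith)
  rcases le_or_gt z (553/729) with hc6 | hc6
  · exact Icc_mul_cover (by norm_num) (by norm_num) (by norm_num) (by norm_num) l0 r1
      (by norm_num; linarith) (by norm_num; linarith)
  · have hz : z ∈ Icc (20/27:ℝ) (7/9) := ⟨by linarith, h2⟩
    have heq : z * 1 = z := mul_one z
    exact heq ▸ mul_mem_Pset (l0 hz) one_mem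

/-! ### The gap set of the product -/

noncomputable def pL (k : ℕ) : ℝ := (2/3 + 1/3^(k+3)) * (2/3 + 1/3^(k+2))
noncomputable def qL (k : ℕ) : ℝ := (2/3 + 2/3^(k+3))^2
noncomputable def uR (k : ℕ) : ℝ := 1 - 2/3^(k+3)
noncomputable def vR (k : ℕ) : ℝ := (1 - 1/3^(k+3))^2

noncomputable def Gset : Set ℝ :=
  (⋃ k : ℕ, Ioo (pL k) (qL k)) ∪ Ioo (7/9) (64/81) ∪ ⋃ k : ℕ, Ioo (uR k) (vR k)

lemma gapL_aux {x y : ℝ} (k : ℕ) (hx : x ∈ fastD 1) (hy : y ∈ fastD 1) (hxy : x ≤ y)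
    (hp : (2/3 + 1/3^(k+3)) * (2/3 + 1/3^(k+2)) < x*y)
    (hq : x*y < (2/3 + 2/3^(k+3))^2) : False := by
  obtain ⟨hx1, hx2⟩ := fastD1_mem_Icc hx
  obtain ⟨hy1, hy2⟩ := fastD1_mem_Icc hy
  have ha3 : (0:ℝ) < 1/3^(k+3) := inv_tp_pos _
  have ha2 : (0:ℝ) < 1/3^(k+2) := inv_tp_pos _
  rw [pow_two] at hq
  have hxl : x < 2/3 + 2/3^(k+3) := by
    by_contra h
    push_neg at h
    have h2 : (2/3 + 2/3^(k+3)) * (2/3 + 2/3^(k+3)) ≤ x * y :=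
      mul_le_mul h (le_trans h hxy) (by positivity) (by linarith)
    linarith
  have hxc : x ≤ 2/3 + 1/3^(k+3) := by
    rcases gapNotL hx k with h | h
    · exact h
    · linarith
  have hyg : 2/3 + 1/3^(k+2) < y := by
    have h1 : x * y ≤ (2/3 + 1/3^(k+3)) * y := mul_le_mul_of_nonneg_right hxc (by linarith)
    have h2 : (2/3 + 1/3^(k+3)) * (2/3 + 1/3^(k+2)) < (2/3 + 1/3^(k+3)) * y :=
      lt_of_lt_of_le hp h1
    exact lt_of_mul_lt_mul_left h2 (by positivity)
  rcases k with _ | j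
  · norm_num at hyg hq
    have h89 : (8/9:ℝ) ≤ y := by
      rcases gapNotM hy with h | h
      · linarith
      · exact h
    have : (2/3) * (8/9) ≤ x * y := mul_le_mul hx1 h89 (by norm_num) (by linarith)
    norm_num at this
    linarith
  · have e1 : (1:ℝ)/3^(j+1+2) = 1/3^(j+3) := by norm_num [show j+1+2 = j+3 from by omega]
    rw [e1] at hyg
    have hy' : 2/3 + 2/3^(j+3) ≤ y := by
      rcases gapNotL hy j with h | h
      · linarith
      · exact h
    have hgt : (2/3) * (2/3 + 2/3^(j+3)) ≤ x*y :=
      mul_le_mul hx1 hy' (by positivity) (by linarith)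
    have e2 : (2:ℝ)/3^(j+1+3) = 2*(1/3^(j+3))/3 := by
      rw [show j+1+3 = (j+3)+1 from by omega, pow_succ]; ring
    have e3 : (2:ℝ)/3^(j+3) = 2*(1/3^(j+3)) := by ring
    rw [e2] at hq
    rw [e3] at hgt
    have hb0 : (0:ℝ) < 1/3^(j+3) := inv_tp_pos _
    have hb1 : (1:ℝ)/3^(j+3) ≤ 1 := inv_tp_le_one _
    nlinarith [hq, hgt, hb0, hb1]

lemma S_G_disj {z : ℝ} (hz : z ∈ Gset) : z ∉ Pset (fastD 1) (fastD 1) := by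
  intro hmem
  obtain ⟨x, y, hx, hy, rfl⟩ := Pset_cases hmem
  obtain ⟨hx1, hx2⟩ := fastD1_mem_Icc hx
  obtain ⟨hy1, hy2⟩ := fastD1_mem_Icc hy
  rcases hz with (hz | hz) | hz
  · obtain ⟨k, hk1, hk2⟩ := mem_iUnion.1 hz
    unfold pL at hk1
    unfold qL at hk2
    rcases le_total x y with h | h
    · exact gapL_aux k hx hy h hk1 hk2
    · refine gapL_aux k hy hx h ?_ ?_
      · rw [mul_comm y x]; exact hk1
      · rw [mul_comm y x]; exact hk2
  · -- middle gap (7/9, 64/81)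
    rcases hz with ⟨hz1, hz2⟩
    have hxle : ¬ (x ≤ 7/9) := by
      intro h
      have : x * y ≤ 7/9 * 1 := mul_le_mul h hy2 (by linarith) (by norm_num)
      norm_num at this
      linarith
    have hyle : ¬ (y ≤ 7/9) := by
      intro h
      have : x * y ≤ 1 * (7/9) := mul_le_mul hx2 h (by linarith) (by norm_num)
      norm_num at this
      linarith
    have hx8 : (8/9:ℝ) ≤ x := (gapNotM hx).resolve_left hxle
    have hy8 : (8/9:ℝ) ≤ y := (gapNotM hy).resolve_left hyle
    have : (8/9:ℝ) * (8/9) ≤ x * y := mul_le_mul hx8 hy8 (by norm_num) (by linarith)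
    norm_num at this
    linarith
  · obtain ⟨m, hm1, hm2⟩ := mem_iUnion.1 hz
    unfold uR at hm1
    unfold vR at hm2
    have hb0 : (0:ℝ) < 1/3^(m+3) := inv_tp_pos _
    have hxg : 1 - 2/3^(m+3) < x := by
      have : x * y ≤ x * 1 := mul_le_mul_of_nonneg_left hy2 (by linarith)
      rw [mul_one] at this
      linarith
    have hyg : 1 - 2/3^(m+3) < y := by
      have : x * y ≤ 1 * y := mul_le_mul_of_nonneg_right hx2 (by linarith)
      rw [one_mul] at this
      linarith
    have hx' : 1 - 1/3^(m+3) ≤ x := by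
      rcases gapNotR hx m with h | h
      · linarith
      · exact h
    have hy' : 1 - 1/3^(m+3) ≤ y := by
      rcases gapNotR hy m with h | h
      · linarith
      · exact h
    have hb27 : (1:ℝ)/3^(m+3) ≤ 1/27 := inv_tp_le27 m
    have : (1 - 1/3^(m+3)) * (1 - 1/3^(m+3)) ≤ x * y :=
      mul_le_mul hx' hy' (by linarith) (by linarith)
    rw [pow_two] at hm2
    linarith

/-! ### The main set identity -/

lemma pL_lt_of_big {z : ℝ} (hz : 4/9 < z) : ∃ k, pL k < z := by
  obtain ⟨n, hn⟩ := exists_pow_lt_of_lt_one (show (0:ℝ) < (z - 4/9)/3 by linarith)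
    (show (1/3:ℝ) < 1 by norm_num)
  refine ⟨n, ?_⟩
  have hB : ((1:ℝ)/3)^n = 1/3^n := by rw [div_pow, one_pow]
  rw [hB] at hn
  have hb0 : (0:ℝ) < 1/3^n := inv_tp_pos _
  have hb1 : (1:ℝ)/3^n ≤ 1 := inv_tp_le_one _
  have e2 : (1:ℝ)/3^(n+2) ≤ 1/3^n := inv_tp_le (by omega)
  have e3 : (1:ℝ)/3^(n+3) ≤ 1/3^n := inv_tp_le (by omega)
  have h2 : (0:ℝ) < 1/3^(n+2) := inv_tp_pos _
  have h3 : (0:ℝ) < 1/3^(n+3) := inv_tp_pos _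
  unfold pL
  nlinarith [hn, hb0, hb1, e2, e3, h2, h3]

lemma vR_gt_of_small {z : ℝ} (hz : z < 1) : ∃ m, z < vR m := by
  obtain ⟨n, hn⟩ := exists_pow_lt_of_lt_one (show (0:ℝ) < 1 - z by linarith)
    (show (1/3:ℝ) < 1 by norm_num)
  refine ⟨n, ?_⟩
  have hB : ((1:ℝ)/3)^n = 1/3^n := by rw [div_pow, one_pow]
  rw [hB] at hn
  have e3 : (1:ℝ)/3^(n+3) ≤ (1/3^n)/27 := by
    have : (1:ℝ)/3^(n+3) = (1/3^n)/27 := by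
      rw [show n+3 = ((n+1)+1)+1 from rfl, pow_succ, pow_succ, pow_succ]; ring
    linarith
  have h3 : (0:ℝ) < 1/3^(n+3) := inv_tp_pos _
  have hb0 : (0:ℝ) < 1/3^n := inv_tp_pos _
  unfold vR
  nlinarith [hn, e3, h3, hb0]

lemma S_eq : Pset (fastD 1) (fastD 1) = Icc (4/9:ℝ) 1 \ Gset := by
  apply Subset.antisymm
  · intro z hmem
    obtain ⟨x, y, hx, hy, rfl⟩ := Pset_cases hmem
    obtain ⟨hx1, hx2⟩ := fastD1_mem_Icc hx
    obtain ⟨hy1, hy2⟩ := fastD1_mem_Icc hy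
    refine ⟨⟨?_, ?_⟩, fun hG => S_G_disj hG hmem⟩
    · nlinarith
    · nlinarith
  · rintro z ⟨⟨hz1, hz2⟩, hzG⟩
    have hnotL : ∀ k, z ∉ Ioo (pL k) (qL k) := fun k hk =>
      hzG (Or.inl (Or.inl (mem_iUnion.2 ⟨k, hk⟩)))
    have hnotM : z ∉ Ioo (7/9:ℝ) (64/81) := fun hk => hzG (Or.inl (Or.inr hk))
    have hnotR : ∀ k, z ∉ Ioo (uR k) (vR k) := fun k hk =>
      hzG (Or.inr (mem_iUnion.2 ⟨k, hk⟩))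
    classical
    rcases le_or_gt z (7/9) with h79 | h79
    · rcases eq_or_lt_of_le hz1 with heq | hlt
      · refine ⟨2/3, two_thirds_mem, 2/3, two_thirds_mem, ?_⟩
        rw [← heq]; norm_num
      · have hex : ∃ k, pL k < z := pL_lt_of_big hlt
        set k := Nat.find hex with hkdef
        have hk : pL k < z := Nat.find_spec hex
        have hq : qL k ≤ z := by
          by_contra h
          push_neg at h
          exact hnotL k ⟨hk, h⟩
        rcases hk' : k with _ | j
        · rw [hk'] at hq
          have : qL 0 = 400/729 := by unfold qL; norm_num
          rw [this] at hq
          exact coverL0 hq h79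
        · have hmin : ¬ pL j < z := Nat.find_min hex (by omega)
          push_neg at hmin
          rw [hk'] at hq
          have e : qL (j+1) = (2/3 + 2/3^(j+4))^2 := by
            unfold qL
            rw [show j+1+3 = j+4 from by omega]
          rw [e] at hq
          exact coverL j hq (by unfold pL at hmin; exact hmin)
    · have h64 : (64:ℝ)/81 ≤ z := by
        by_contra h
        push_neg at h
        exact hnotM ⟨h79, h⟩
      rcases eq_or_lt_of_le hz2 with heq | hlt
      · rw [heq]
        exact ⟨1, one_mem, 1, one_mem, mul_one 1⟩
      · have hex : ∃ m, z < vR m := vR_gt_of_small hlt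
        set m := Nat.find hex with hmdef
        have hm : z < vR m := Nat.find_spec hex
        have hu : z ≤ uR m := by
          by_contra h
          push_neg at h
          exact hnotR m ⟨h, hm⟩
        rcases hm' : m with _ | j
        · rw [hm'] at hu
          refine coverR 0 ?_ hu
          have e : ((1:ℝ) - 1/3^(0+2))^2 = 64/81 := by norm_num
          rw [e]
          exact h64
        · have hmin : ¬ z < vR j := Nat.find_min hex (by omega)
          push_neg at hmin
          rw [hm'] at hu
          apply coverR (j+1) ?_ ?_
          · have e : vR j = (1 - 1/3^(j+1+2))^2 := by
              unfold vR
              rw [show j+1+2 = j+3 from by omega]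
            rw [e] at hmin
            exact hmin
          · have e : uR (j+1) = 1 - 2/3^(j+1+3) := rfl
            rw [e] at hu
            exact hu

lemma Pset_Icc : Pset (Icc (2/3:ℝ) 1) (Icc (2/3:ℝ) 1) = Icc (4/9:ℝ) 1 := by
  apply Subset.antisymm
  · intro z hmem
    obtain ⟨x, y, ⟨hx1, hx2⟩, ⟨hy1, hy2⟩, rfl⟩ := Pset_cases hmem
    constructor
    · nlinarith
    · nlinarith
  · rintro z ⟨hz1, hz2⟩
    rcases le_total z (2/3) with h | h
    · refine ⟨2/3, ⟨le_refl _, by norm_num⟩, 3*z/2, ⟨by linarith, by linarith⟩, by ring⟩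
    · exact ⟨z, ⟨h, hz2⟩, 1, ⟨by norm_num, le_refl _⟩, mul_one z⟩

lemma Gset_sub : Gset ⊆ Icc (4/9:ℝ) 1 := by
  rintro z ((hz | hz) | hz)
  · obtain ⟨k, hk1, hk2⟩ := mem_iUnion.1 hz
    have h3 : (0:ℝ) < 1/3^(k+3) := inv_tp_pos _
    have h2 : (0:ℝ) < 1/3^(k+2) := inv_tp_pos _
    have hb : (1:ℝ)/3^(k+3) ≤ 1/27 := inv_tp_le27 k
    unfold pL at hk1
    unfold qL at hk2
    have e3 : (2:ℝ)/3^(k+3) = 2*(1/3^(k+3)) := by ring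
    rw [e3] at hk2
    constructor
    · nlinarith
    · nlinarith
  · obtain ⟨h1, h2⟩ := hz
    constructor <;> [linarith; linarith]
  · obtain ⟨m, hm1, hm2⟩ := mem_iUnion.1 hz
    have h3 : (0:ℝ) < 1/3^(m+3) := inv_tp_pos _
    have hb : (1:ℝ)/3^(m+3) ≤ 1/27 := inv_tp_le27 m
    unfold uR at hm1
    unfold vR at hm2
    have e3 : (2:ℝ)/3^(m+3) = 2*(1/3^(m+3)) := by ring
    rw [e3] at hm1
    constructor
    · nlinarith
    · nlinarith

/-! ### Volume computation -/

lemma qL_le (k : ℕ) : qL k ≤ 400/729 := by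
  unfold qL
  have h3 : (0:ℝ) < 1/3^(k+3) := inv_tp_pos _
  have hb : (1:ℝ)/3^(k+3) ≤ 1/27 := inv_tp_le27 k
  have e3 : (2:ℝ)/3^(k+3) = 2*(1/3^(k+3)) := by ring
  rw [e3]
  nlinarith

lemma uR_ge (k : ℕ) : 25/27 ≤ uR k := by
  unfold uR
  have hb : (1:ℝ)/3^(k+3) ≤ 1/27 := inv_tp_le27 k
  have e3 : (2:ℝ)/3^(k+3) = 2*(1/3^(k+3)) := by ring
  rw [e3]
  linarith

lemma gap_len_L (k : ℕ) : qL k - pL k = 1/9^(k+3) := by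
  unfold pL qL
  have E2 : (1:ℝ)/3^(k+2) = 3*(1/3^(k+3)) := by
    rw [show k+3 = (k+2)+1 from rfl, pow_succ]; ring
  have E3 : (2:ℝ)/3^(k+3) = 2*(1/3^(k+3)) := by ring
  have E9 : (1:ℝ)/9^(k+3) = (1/3^(k+3))^2 := by
    rw [div_pow, one_pow, ← pow_mul]
    norm_num
    rw [show (k+3)*2 = 2*(k+3) from by ring, pow_mul]
    norm_num
  rw [E2, E3, E9]
  ring

lemma gap_len_R (k : ℕ) : vR k - uR k = 1/9^(k+3) := by
  unfold uR vR
  have E3 : (2:ℝ)/3^(k+3) = 2*(1/3^(k+3)) := by ring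
  have E9 : (1:ℝ)/9^(k+3) = (1/3^(k+3))^2 := by
    rw [div_pow, one_pow, ← pow_mul]
    norm_num
    rw [show (k+3)*2 = 2*(k+3) from by ring, pow_mul]
    norm_num
  rw [E3, E9]
  ring

lemma qL_le_pL {i j : ℕ} (h : i < j) : qL j ≤ pL i := by
  unfold pL qL
  have hA : (0:ℝ) < 1/3^(i+3) := inv_tp_pos _
  have hB : (0:ℝ) < 1/3^(j+3) := inv_tp_pos _
  have E2 : (1:ℝ)/3^(i+2) = 3*(1/3^(i+3)) := by
    rw [show i+3 = (i+2)+1 from rfl, pow_succ]; ring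
  have E3 : (2:ℝ)/3^(j+3) = 2*(1/3^(j+3)) := by ring
  have hBA : (1:ℝ)/3^(j+3) ≤ (1/3^(i+3))/3 := by
    have h1 : (1:ℝ)/3^(j+3) ≤ 1/3^(i+4) := inv_tp_le (by omega)
    have h2 : (1:ℝ)/3^(i+4) = (1/3^(i+3))/3 := by
      rw [show i+4 = (i+3)+1 from rfl, pow_succ]; ring
    linarith
  rw [E2, E3]
  nlinarith

lemma vR_le_uR {i j : ℕ} (h : i < j) : vR i ≤ uR j := by
  unfold uR vR
  have hA : (0:ℝ) < 1/3^(i+3) := inv_tp_pos _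
  have hA1 : (1:ℝ)/3^(i+3) ≤ 1 := inv_tp_le_one _
  have E3 : (2:ℝ)/3^(j+3) = 2*(1/3^(j+3)) := by ring
  have hBA : (1:ℝ)/3^(j+3) ≤ (1/3^(i+3))/3 := by
    have h1 : (1:ℝ)/3^(j+3) ≤ 1/3^(i+4) := inv_tp_le (by omega)
    have h2 : (1:ℝ)/3^(i+4) = (1/3^(i+3))/3 := by
      rw [show i+4 = (i+3)+1 from rfl, pow_succ]; ring
    linarith
  rw [E3]
  nlinarith

lemma pL_ge (k : ℕ) : 4/9 ≤ pL k := by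
  unfold pL
  have h3 : (0:ℝ) < 1/3^(k+3) := inv_tp_pos _
  have h2 : (0:ℝ) < 1/3^(k+2) := inv_tp_pos _
  nlinarith

lemma vR_le_one (k : ℕ) : vR k ≤ 1 := by
  unfold vR
  have h3 : (0:ℝ) < 1/3^(k+3) := inv_tp_pos _
  have hA1 : (1:ℝ)/3^(k+3) ≤ 1 := inv_tp_le_one _
  nlinarith

lemma geom_sum_ninth : ∑' k : ℕ, ((1:ℝ)/9^(k+3)) = 1/648 := by
  have h1 : ∀ k : ℕ, (1:ℝ)/9^(k+3) = (1/9)^3 * (1/9)^k := by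
    intro k
    rw [← pow_add, add_comm 3 k, one_div_pow]
  rw [tsum_congr h1, tsum_mul_left, tsum_geometric_of_lt_one (by norm_num) (by norm_num)]
  norm_num

lemma summable_ninth : Summable (fun k : ℕ => (1:ℝ)/9^(k+3)) := by
  have h := (summable_geometric_of_lt_one (show (0:ℝ) ≤ 1/9 by norm_num)
    (by norm_num)).mul_left (((1:ℝ)/9)^3)
  refine h.congr fun k => ?_
  rw [← pow_add, add_comm 3 k, one_div_pow]

lemma vol_iUnion_L : volume (⋃ k : ℕ, Ioo (pL k) (qL k)) = ENNReal.ofReal (1/648) := by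
  rw [measure_iUnion ?_ (fun k => measurableSet_Ioo)]
  · have h1 : ∀ k : ℕ, volume (Ioo (pL k) (qL k)) = ENNReal.ofReal ((1:ℝ)/9^(k+3)) := by
      intro k
      rw [Real.volume_Ioo, gap_len_L]
    rw [tsum_congr h1, ← ENNReal.ofReal_tsum_of_nonneg (fun k => by positivity) summable_ninth,
      geom_sum_ninth]
  · intro i j hij
    rcases hij.lt_or_gt with h | h
    · apply Set.disjoint_left.2
      intro x hx hx'
      have h1 := qL_le_pL h
      obtain ⟨ha, hb⟩ := hx
      obtain ⟨hc, hd⟩ := hx'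
      linarith
    · apply Set.disjoint_left.2
      intro x hx hx'
      have h1 := qL_le_pL h
      obtain ⟨ha, hb⟩ := hx
      obtain ⟨hc, hd⟩ := hx'
      linarith

lemma vol_iUnion_R : volume (⋃ k : ℕ, Ioo (uR k) (vR k)) = ENNReal.ofReal (1/648) := by
  rw [measure_iUnion ?_ (fun k => measurableSet_Ioo)]
  · have h1 : ∀ k : ℕ, volume (Ioo (uR k) (vR k)) = ENNReal.ofReal ((1:ℝ)/9^(k+3)) := by
      intro k
      rw [Real.volume_Ioo, gap_len_R]
    rw [tsum_congr h1, ← ENNReal.ofReal_tsum_of_nonneg (fun k => by positivity) summable_ninth,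
      geom_sum_ninth]
  · intro i j hij
    rcases hij.lt_or_gt with h | h
    · apply Set.disjoint_left.2
      intro x hx hx'
      have h1 := vR_le_uR h
      obtain ⟨ha, hb⟩ := hx
      obtain ⟨hc, hd⟩ := hx'
      linarith
    · apply Set.disjoint_left.2
      intro x hx hx'
      have h1 := vR_le_uR h
      obtain ⟨ha, hb⟩ := hx
      obtain ⟨hc, hd⟩ := hx'
      linarith

lemma vol_Gset : volume Gset = ENNReal.ofReal (5/324) := by
  unfold Gset
  have hmeas1 : MeasurableSet (Ioo (7/9:ℝ) (64/81) ∪ ⋃ k : ℕ, Ioo (uR k) (vR k)) :=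
    (measurableSet_Ioo).union (MeasurableSet.iUnion fun k => measurableSet_Ioo)
  have hd1 : Disjoint (⋃ k : ℕ, Ioo (pL k) (qL k))
      (Ioo (7/9:ℝ) (64/81) ∪ ⋃ k : ℕ, Ioo (uR k) (vR k)) := by
    apply Set.disjoint_left.2
    intro x hx hx'
    obtain ⟨k, hk1, hk2⟩ := mem_iUnion.1 hx
    have := qL_le k
    rcases hx' with h | h
    · obtain ⟨h1, h2⟩ := h
      linarith
    · obtain ⟨m, hm1, hm2⟩ := mem_iUnion.1 h
      have := uR_ge m
      linarith
  have hd2 : Disjoint (Ioo (7/9:ℝ) (64/81)) (⋃ k : ℕ, Ioo (uR k) (vR k)) := by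
    apply Set.disjoint_left.2
    intro x hx hx'
    obtain ⟨h1, h2⟩ := hx
    obtain ⟨m, hm1, hm2⟩ := mem_iUnion.1 hx'
    have := uR_ge m
    linarith
  rw [union_assoc, measure_union hd1 hmeas1,
    measure_union hd2 (MeasurableSet.iUnion fun k => measurableSet_Ioo),
    vol_iUnion_L, vol_iUnion_R, Real.volume_Ioo]
  rw [show (64:ℝ)/81 - 7/9 = 1/81 from by norm_num]
  rw [← ENNReal.ofReal_add (by norm_num) (by norm_num), ← ENNReal.ofReal_add (by norm_num) (by norm_num)]
  norm_num

theorem stmt18 :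
    volume (Pset (Icc (2/3 : ℝ) 1) (Icc (2/3 : ℝ) 1) \ Pset (fastD 1) (fastD 1)) =
      ENNReal.ofReal (5/324) := by
  rw [Pset_Icc, S_eq, diff_diff_right, diff_self, empty_union,
    inter_eq_self_of_subset_right Gset_sub, vol_Gset]
end
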